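/- arXiv:0811.2259 — 9 statements merged into one kernel-verified Lean document; each statement's English description precedes it below -/
import Mathlib

section
/- For g-by-g positive definite rational symmetric matrices, the dyadic trace is subadditive across block decompositions: if T = [[T₁, W],[Wᵀ, T₂]] is positive definite with T₁ ∈ 𝒫_{g₁}(ℚ), T₂ ∈ 𝒫_{g₂}(ℚ), then w(T) ≤ w(T₁) + w(T₂). -/
open Matrix

/-- The quadratic form `uᵀ s u` of an integer vector `u`, valued in `ℝ`. -/
noncomputable def quadForm {n : Type*} [Fintype n] (s : Matrix n n ℝ) (u : n → ℤ) : ℝ :=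
  (fun i => (u i : ℝ)) ⬝ᵥ s.mulVec (fun i => (u i : ℝ))

/-- The minimum function `m(s) = inf_{u ∈ ℤ^n \ {0}} uᵀ s u`. -/
noncomputable def minFun {n : Type*} [Fintype n] (s : Matrix n n ℝ) : ℝ :=
  sInf {x : ℝ | ∃ u : n → ℤ, u ≠ 0 ∧ x = quadForm s u}

/-- The dyadic trace `w(s) = inf_{u pos. def.} ⟨u,s⟩ / m(u)` with `⟨A,B⟩ = tr(AB)`. -/
noncomputable def dyadicTrace {n : Type*} [Fintype n] (s : Matrix n n ℝ) : ℝ :=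
  sInf {x : ℝ | ∃ u : Matrix n n ℝ, u.PosDef ∧ x = (u * s).trace / minFun u}

/-- A matrix has rational entries. -/
def RationalEntries {n : Type*} (s : Matrix n n ℝ) : Prop :=
  ∀ i j, ∃ q : ℚ, s i j = (q : ℝ)

section Aux

variable {n : Type*} [Fintype n]

lemma exists_quad_lb [DecidableEq n] {u : Matrix n n ℝ}
    (hu : u.PosDef) : ∃ ε > 0, ∀ v : n → ℝ, ε * (v ⬝ᵥ v) ≤ v ⬝ᵥ u *ᵥ v := by
  cases isEmpty_or_nonempty n with
  | inl h => exact ⟨1, one_pos, fun v => by simp [dotProduct]⟩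
  | inr h =>
    have hH : u.IsHermitian := hu.1
    set ε := Finset.univ.inf' Finset.univ_nonempty hH.eigenvalues with hεdef
    have hε : 0 < ε := by
      rw [hεdef, Finset.lt_inf'_iff]
      exact fun i _ => hu.eigenvalues_pos i
    have hle : ∀ i, ε ≤ hH.eigenvalues i := fun i =>
      Finset.inf'_le _ (Finset.mem_univ i)
    refine ⟨ε, hε, fun v => ?_⟩
    have hM : (u - ε • 1).PosSemidef := by
      have hV : (hH.eigenvectorUnitary : Matrix n n ℝ) *
          star (hH.eigenvectorUnitary : Matrix n n ℝ) = 1 :=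
        (Matrix.mem_unitaryGroup_iff).mp hH.eigenvectorUnitary.2
      have h1 : u - ε • 1 = (hH.eigenvectorUnitary : Matrix n n ℝ) *
          (diagonal (fun i => hH.eigenvalues i - ε)) *
          star (hH.eigenvectorUnitary : Matrix n n ℝ) := by
        conv_lhs => rw [hH.spectral_theorem]
        have : (diagonal (fun i => hH.eigenvalues i - ε) : Matrix n n ℝ)
            = diagonal (RCLike.ofReal ∘ hH.eigenvalues) - ε • 1 := by
          simp [Matrix.diagonal_sub, Matrix.smul_eq_diagonal_mul]
        rw [this, Unitary.conjStarAlgAut_apply, Matrix.mul_sub, Matrix.sub_mul, mul_smul_comm, smul_mul_assoc, mul_one, hV]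
      rw [h1]
      exact (posSemidef_diagonal_iff.mpr (fun i => by
        simpa using sub_nonneg.mpr (hle i))).mul_mul_conjTranspose_same _
    have h2 := hM.dotProduct_mulVec_nonneg v
    simp only [star_trivial, sub_mulVec, dotProduct_sub, smul_mulVec, one_mulVec,
      dotProduct_smul, smul_eq_mul] at h2
    linarith

lemma quadForm_nonneg {u : Matrix n n ℝ} (hu : u.PosSemidef) (v : n → ℤ) :
    0 ≤ quadForm u v := by
  simpa [quadForm] using hu.dotProduct_mulVec_nonneg (fun i => (v i : ℝ))

lemma minFun_le {u : Matrix n n ℝ} (hu : u.PosSemidef) {v : n → ℤ} (hv : v ≠ 0) :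
    minFun u ≤ quadForm u v := by
  refine csInf_le ⟨0, fun x ⟨w, _, hw⟩ => hw ▸ quadForm_nonneg hu w⟩ ⟨v, hv, rfl⟩

lemma minFun_set_nonempty [Nonempty n] (u : Matrix n n ℝ) :
    {x : ℝ | ∃ v : n → ℤ, v ≠ 0 ∧ x = quadForm u v}.Nonempty := by
  refine ⟨quadForm u (fun _ => 1), fun _ => 1, fun h => ?_, rfl⟩
  have := congrFun h (Classical.arbitrary n)
  simp at this

lemma minFun_pos [Nonempty n] [DecidableEq n] {u : Matrix n n ℝ} (hu : u.PosDef) :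
    0 < minFun u := by
  obtain ⟨ε, hε, hb⟩ := exists_quad_lb hu
  have : ε ≤ minFun u := by
    refine le_csInf (minFun_set_nonempty u) ?_
    rintro x ⟨v, hv, rfl⟩
    have h1 : (1 : ℝ) ≤ (fun i => (v i : ℝ)) ⬝ᵥ (fun i => (v i : ℝ)) := by
      obtain ⟨i, hi⟩ := Function.ne_iff.mp hv
      have h2 : (1 : ℝ) ≤ (v i : ℝ) * (v i : ℝ) := by
        have := Int.one_le_abs (by simpa using hi)
        have : (1 : ℤ) ≤ v i * v i := by nlinarith [abs_nonneg (v i), sq_abs (v i)]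
        exact_mod_cast this
      calc (1 : ℝ) ≤ (v i : ℝ) * (v i : ℝ) := h2
        _ ≤ _ := Finset.single_le_sum (fun j _ => mul_self_nonneg ((v j : ℝ)))
            (Finset.mem_univ i)
    calc ε = ε * 1 := (mul_one ε).symm
      _ ≤ ε * ((fun i => (v i : ℝ)) ⬝ᵥ (fun i => (v i : ℝ))) := by
          exact mul_le_mul_of_nonneg_left h1 hε.le
      _ ≤ quadForm u v := hb _
  linarith

lemma minFun_nonneg [Nonempty n] {u : Matrix n n ℝ} (hu : u.PosSemidef) :
    0 ≤ minFun u :=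
  le_csInf (minFun_set_nonempty u) (by rintro x ⟨v, hv, rfl⟩; exact quadForm_nonneg hu v)

lemma trace_mul_nonneg {u s : Matrix n n ℝ} (hu : u.PosSemidef) (hs : s.PosSemidef) :
    0 ≤ (u * s).trace := by
  classical
  obtain ⟨B, rfl⟩ : ∃ B : Matrix n n ℝ, u = Bᴴ * B := by
    open scoped MatrixOrder in
    simpa [star_eq_conjTranspose] using CStarAlgebra.nonneg_iff_eq_star_mul_self.mp hu.nonneg
  have h1 : (Bᴴ * B * s).trace = (B * s * Bᴴ).trace := by
    rw [mul_assoc, Matrix.trace_mul_comm, mul_assoc]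
  rw [h1]
  have hM : (B * s * Bᴴ).PosSemidef := hs.mul_mul_conjTranspose_same B
  have : ∀ i, 0 ≤ (B * s * Bᴴ) i i := fun i => by
    simpa [dotProduct, Pi.single_apply, mulVec] using hM.dotProduct_mulVec_nonneg (Pi.single i 1)
  exact Finset.sum_nonneg fun i _ => this i

end Aux

section Blocks

variable {m n : Type*} [Fintype m] [Fintype n]

lemma quadForm_smul (c : ℝ) (A : Matrix n n ℝ) (v : n → ℤ) :
    quadForm (c • A) v = c * quadForm A v := by
  simp [quadForm, smul_mulVec]

lemma quadForm_fromBlocks (A : Matrix m m ℝ) (D : Matrix n n ℝ) (v : m ⊕ n → ℤ) :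
    quadForm (fromBlocks A 0 0 D) v
      = quadForm A (v ∘ Sum.inl) + quadForm D (v ∘ Sum.inr) := by
  unfold quadForm
  have hx : (fun i => ((v i : ℝ))) =
      Sum.elim (fun i => ((v (Sum.inl i) : ℝ))) (fun i => ((v (Sum.inr i) : ℝ))) := by
    funext i; cases i <;> rfl
  rw [hx, fromBlocks_mulVec, zero_mulVec, add_zero, zero_mulVec, zero_add,
    sumElim_dotProduct_sumElim]
  rfl

lemma posDef_smul' {A : Matrix n n ℝ} (hA : A.PosDef) {c : ℝ} (hc : 0 < c) :
    (c • A).PosDef := by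
  refine Matrix.PosDef.of_dotProduct_mulVec_pos ?_ ?_
  · show (c • A)ᴴ = c • A
    rw [conjTranspose_smul, hA.1.eq, star_trivial]
  · intro x hx
    rw [smul_mulVec, dotProduct_smul, smul_eq_mul]
    exact mul_pos hc (hA.dotProduct_mulVec_pos hx)

lemma posDef_fromBlocks_diag {A : Matrix m m ℝ} {D : Matrix n n ℝ}
    (hA : A.PosDef) (hD : D.PosDef) : (fromBlocks A 0 0 D).PosDef := by
  refine Matrix.PosDef.of_dotProduct_mulVec_pos ?_ ?_
  · show (fromBlocks A 0 0 D)ᴴ = fromBlocks A 0 0 D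
    simp only [fromBlocks_conjTranspose, conjTranspose_zero, hA.1.eq, hD.1.eq]
  · intro x hx
    have hx' : Sum.elim (x ∘ Sum.inl) (x ∘ Sum.inr) = x := Sum.elim_comp_inl_inr x
    rw [star_trivial, ← hx', fromBlocks_mulVec, zero_mulVec, add_zero, zero_mulVec, zero_add,
      sumElim_dotProduct_sumElim]
    have hne : x ∘ Sum.inl ≠ 0 ∨ x ∘ Sum.inr ≠ 0 := by
      by_contra h
      push_neg at h
      apply hx
      rw [← hx', h.1, h.2]
      funext i; cases i <;> rfl
    rcases hne with h | h
    · exact add_pos_of_pos_of_nonneg (by simpa using hA.dotProduct_mulVec_pos h)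
        (by simpa using hD.posSemidef.dotProduct_mulVec_nonneg (x ∘ Sum.inr))
    · exact add_pos_of_nonneg_of_pos (by simpa using hA.posSemidef.dotProduct_mulVec_nonneg (x ∘ Sum.inl))
        (by simpa using hD.dotProduct_mulVec_pos h)

lemma trace_fromBlocks (A : Matrix m m ℝ) (B : Matrix m n ℝ) (C : Matrix n m ℝ)
    (D : Matrix n n ℝ) : (fromBlocks A B C D).trace = A.trace + D.trace := by
  simp [Matrix.trace, Matrix.diag, Fintype.sum_sum_type]

end Blocks

/-- Subadditivity of the dyadic trace across block decompositions:
if `T = [[T₁, W],[Wᵀ, T₂]]` is positive definite with rational entries, then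
`w(T) ≤ w(T₁) + w(T₂)`. -/
theorem dyadicTrace_block_subadditive {g₁ g₂ : ℕ} (hg₁ : 1 ≤ g₁) (hg₂ : 1 ≤ g₂)
    (T₁ : Matrix (Fin g₁) (Fin g₁) ℝ) (T₂ : Matrix (Fin g₂) (Fin g₂) ℝ)
    (W : Matrix (Fin g₁) (Fin g₂) ℝ)
    (hQ₁ : RationalEntries T₁) (hQ₂ : RationalEntries T₂)
    (hQW : ∀ i j, ∃ q : ℚ, W i j = (q : ℝ))
    (hT₁ : T₁.PosDef) (hT₂ : T₂.PosDef)
    (hT : (Matrix.fromBlocks T₁ W Wᵀ T₂).PosDef) :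
    dyadicTrace (Matrix.fromBlocks T₁ W Wᵀ T₂) ≤ dyadicTrace T₁ + dyadicTrace T₂ := by
  haveI : Nonempty (Fin g₁) := ⟨⟨0, hg₁⟩⟩
  haveI : Nonempty (Fin g₂) := ⟨⟨0, hg₂⟩⟩
  set T := Matrix.fromBlocks T₁ W Wᵀ T₂ with hTdef
  set S := {x : ℝ | ∃ u : Matrix (Fin g₁ ⊕ Fin g₂) (Fin g₁ ⊕ Fin g₂) ℝ,
    u.PosDef ∧ x = (u * T).trace / minFun u} with hSdef
  set S₁ := {x : ℝ | ∃ u : Matrix (Fin g₁) (Fin g₁) ℝ,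
    u.PosDef ∧ x = (u * T₁).trace / minFun u} with hS₁def
  set S₂ := {x : ℝ | ∃ u : Matrix (Fin g₂) (Fin g₂) ℝ,
    u.PosDef ∧ x = (u * T₂).trace / minFun u} with hS₂def
  have hS₁ne : S₁.Nonempty := ⟨_, 1, Matrix.PosDef.one, rfl⟩
  have hS₂ne : S₂.Nonempty := ⟨_, 1, Matrix.PosDef.one, rfl⟩
  have hSbdd : BddBelow S := by
    refine ⟨0, ?_⟩
    rintro x ⟨u, hu, rfl⟩
    exact div_nonneg (trace_mul_nonneg hu.posSemidef hT.posSemidef)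
      (minFun_nonneg hu.posSemidef)
  have key : ∀ x₁ ∈ S₁, ∀ x₂ ∈ S₂, dyadicTrace T ≤ x₁ + x₂ := by
    rintro x₁ ⟨u₁, hu₁, rfl⟩ x₂ ⟨u₂, hu₂, rfl⟩
    set m₁ := minFun u₁ with hm₁def
    set m₂ := minFun u₂ with hm₂def
    have hm₁ : 0 < m₁ := minFun_pos hu₁
    have hm₂ : 0 < m₂ := minFun_pos hu₂
    set U := Matrix.fromBlocks (m₁⁻¹ • u₁) 0 0 (m₂⁻¹ • u₂) with hUdef
    have hU : U.PosDef := posDef_fromBlocks_diag (posDef_smul' hu₁ (by positivity))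
      (posDef_smul' hu₂ (by positivity))
    -- minFun U ≥ 1
    have hmU : 1 ≤ minFun U := by
      refine le_csInf (minFun_set_nonempty U) ?_
      rintro x ⟨v, hv, rfl⟩
      rw [hUdef, quadForm_fromBlocks, quadForm_smul, quadForm_smul]
      have hone : v ∘ Sum.inl ≠ 0 ∨ v ∘ Sum.inr ≠ 0 := by
        by_contra h
        push_neg at h
        apply hv
        funext i
        cases i with
        | inl i => exact congrFun h.1 i
        | inr i => exact congrFun h.2 i
      have hq₁ : 0 ≤ m₁⁻¹ * quadForm u₁ (v ∘ Sum.inl) :=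
        mul_nonneg (by positivity) (quadForm_nonneg hu₁.posSemidef _)
      have hq₂ : 0 ≤ m₂⁻¹ * quadForm u₂ (v ∘ Sum.inr) :=
        mul_nonneg (by positivity) (quadForm_nonneg hu₂.posSemidef _)
      rcases hone with h | h
      · have : m₁ ≤ quadForm u₁ (v ∘ Sum.inl) := minFun_le hu₁.posSemidef h
        have h1 : 1 ≤ m₁⁻¹ * quadForm u₁ (v ∘ Sum.inl) := by
          rw [← inv_mul_cancel₀ hm₁.ne']
          exact mul_le_mul_of_nonneg_left this (by positivity)
        linarith
      · have : m₂ ≤ quadForm u₂ (v ∘ Sum.inr) := minFun_le hu₂.posSemidef h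
        have h1 : 1 ≤ m₂⁻¹ * quadForm u₂ (v ∘ Sum.inr) := by
          rw [← inv_mul_cancel₀ hm₂.ne']
          exact mul_le_mul_of_nonneg_left this (by positivity)
        linarith
    -- trace of U * T
    have htr : (U * T).trace = m₁⁻¹ * (u₁ * T₁).trace + m₂⁻¹ * (u₂ * T₂).trace := by
      rw [hUdef, hTdef, fromBlocks_multiply, trace_fromBlocks]
      simp [Matrix.smul_mul, Matrix.trace_smul, smul_eq_mul]
    have htr₁ : 0 ≤ (u₁ * T₁).trace := trace_mul_nonneg hu₁.posSemidef hT₁.posSemidef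
    have htr₂ : 0 ≤ (u₂ * T₂).trace := trace_mul_nonneg hu₂.posSemidef hT₂.posSemidef
    have hmem : (U * T).trace / minFun U ∈ S := ⟨U, hU, rfl⟩
    have hstep : dyadicTrace T ≤ (U * T).trace / minFun U := csInf_le hSbdd hmem
    have hfin : (U * T).trace / minFun U
        ≤ (u₁ * T₁).trace / m₁ + (u₂ * T₂).trace / m₂ := by
      have h0 : 0 ≤ (U * T).trace := by rw [htr]; positivity
      calc (U * T).trace / minFun U ≤ (U * T).trace := div_le_self h0 hmU
        _ = (u₁ * T₁).trace / m₁ + (u₂ * T₂).trace / m₂ := by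
            rw [htr]; ring
    exact hstep.trans hfin
  have h1 : ∀ x₂ ∈ S₂, dyadicTrace T - x₂ ≤ sInf S₁ := by
    intro x₂ hx₂
    refine le_csInf hS₁ne fun x₁ hx₁ => ?_
    linarith [key x₁ hx₁ x₂ hx₂]
  have h2 : dyadicTrace T - sInf S₁ ≤ sInf S₂ := by
    refine le_csInf hS₂ne fun x₂ hx₂ => ?_
    linarith [h1 x₂ hx₂]
  have e1 : dyadicTrace T₁ = sInf S₁ := rfl
  have e2 : dyadicTrace T₂ = sInf S₂ := rfl
  rw [e1, e2]
  linarith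
end

section
/- Any type one function φ on positive semidefinite real symmetric g×g matrices is monotone with respect to the Loewner partial order: if s₂ - s₁ is positive semidefinite then φ(s₂) ≥ φ(s₁). Moreover, φ is continuous on the positive definite cone. -/
open Matrix

structure IsTypeOne {g : ℕ} (φ : Matrix (Fin g) (Fin g) ℝ → ℝ) : Prop where
  nonneg : ∀ s : Matrix (Fin g) (Fin g) ℝ, s.PosSemidef → 0 ≤ φ s
  pos : ∀ s : Matrix (Fin g) (Fin g) ℝ, s.PosDef → 0 < φ s
  homog : ∀ (lam : ℝ), 0 ≤ lam → ∀ s : Matrix (Fin g) (Fin g) ℝ, s.PosSemidef →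
    φ (lam • s) = lam * φ s
  superadd : ∀ s₁ s₂ : Matrix (Fin g) (Fin g) ℝ, s₁.PosSemidef → s₂.PosSemidef →
    φ (s₁ + s₂) ≥ φ s₁ + φ s₂



/-- entrywise ℓ¹ size of a matrix -/
noncomputable def entSum {g : ℕ} (A : Matrix (Fin g) (Fin g) ℝ) : ℝ :=
  ∑ i, ∑ j, |A i j|

lemma entSum_nonneg {g : ℕ} (A : Matrix (Fin g) (Fin g) ℝ) : 0 ≤ entSum A :=
  Finset.sum_nonneg fun _ _ => Finset.sum_nonneg fun _ _ => abs_nonneg _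

lemma entSum_continuous {g : ℕ} : Continuous (entSum (g := g)) := by
  unfold entSum
  refine continuous_finset_sum _ fun i _ => continuous_finset_sum _ fun j _ => ?_
  exact ((continuous_apply j).comp (continuous_apply i)).abs

lemma quad_upper {g : ℕ} (A : Matrix (Fin g) (Fin g) ℝ) (x : Fin g → ℝ) :
    |x ⬝ᵥ A *ᵥ x| ≤ entSum A * ‖x‖^2 := by
  have h : x ⬝ᵥ A *ᵥ x = ∑ i, ∑ j, x i * (A i j * x j) := by
    simp [dotProduct, mulVec, Finset.mul_sum]
  rw [h, entSum, Finset.sum_mul]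
  refine (Finset.abs_sum_le_sum_abs _ _).trans (Finset.sum_le_sum fun i _ => ?_)
  rw [Finset.sum_mul]
  refine (Finset.abs_sum_le_sum_abs _ _).trans (Finset.sum_le_sum fun j _ => ?_)
  rw [abs_mul, abs_mul]
  have hx : ∀ k, |x k| ≤ ‖x‖ := fun k => by simpa using norm_le_pi_norm x k
  calc |x i| * (|A i j| * |x j|) = |A i j| * (|x i| * |x j|) := by ring
    _ ≤ |A i j| * (‖x‖ * ‖x‖) :=
        mul_le_mul_of_nonneg_left
          (mul_le_mul (hx i) (hx j) (abs_nonneg _) (norm_nonneg _)) (abs_nonneg _)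
    _ = |A i j| * ‖x‖^2 := by ring

lemma quad_smul {g : ℕ} (s : Matrix (Fin g) (Fin g) ℝ) (a : ℝ) (x : Fin g → ℝ) :
    (a • x) ⬝ᵥ s *ᵥ (a • x) = a^2 * (x ⬝ᵥ s *ᵥ x) := by
  rw [mulVec_smul, dotProduct_smul, smul_dotProduct]
  simp [sq, mul_assoc]

lemma quad_lower {g : ℕ} (hg : 1 ≤ g) {s : Matrix (Fin g) (Fin g) ℝ} (hs : s.PosDef) :
    ∃ c > 0, ∀ x : Fin g → ℝ, c * ‖x‖^2 ≤ x ⬝ᵥ s *ᵥ x := by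
  haveI : Nonempty (Fin g) := ⟨⟨0, hg⟩⟩
  have hsph : (Metric.sphere (0 : Fin g → ℝ) 1).Nonempty :=
    NormedSpace.sphere_nonempty.2 zero_le_one
  have hcont : Continuous fun x : Fin g → ℝ => x ⬝ᵥ s *ᵥ x :=
    continuous_id.dotProduct (continuous_const.matrix_mulVec continuous_id)
  obtain ⟨x₀, hx₀, hmin⟩ := (isCompact_sphere (0 : Fin g → ℝ) 1).exists_isMinOn hsph
    hcont.continuousOn
  have hx₀norm : ‖x₀‖ = 1 := by simpa using hx₀
  have hx₀ne : x₀ ≠ 0 := by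
    intro h; rw [h] at hx₀norm; simp at hx₀norm
  refine ⟨x₀ ⬝ᵥ s *ᵥ x₀, (by simpa using hs.dotProduct_mulVec_pos hx₀ne), fun x => ?_⟩
  rcases eq_or_ne x 0 with rfl | hx
  · simp
  · have hnx : (0:ℝ) < ‖x‖ := norm_pos_iff.2 hx
    have hu : ‖x‖⁻¹ • x ∈ Metric.sphere (0 : Fin g → ℝ) 1 := by
      simp [norm_smul, abs_of_pos (inv_pos.2 hnx), inv_mul_cancel₀ hnx.ne']
    have h2 : x₀ ⬝ᵥ s *ᵥ x₀ ≤ (‖x‖⁻¹ • x) ⬝ᵥ s *ᵥ (‖x‖⁻¹ • x) := hmin hu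
    rw [quad_smul] at h2
    have h3 : (x₀ ⬝ᵥ s *ᵥ x₀) * ‖x‖^2 ≤ (‖x‖⁻¹)^2 * (x ⬝ᵥ s *ᵥ x) * ‖x‖^2 :=
      mul_le_mul_of_nonneg_right h2 (by positivity)
    calc (x₀ ⬝ᵥ s *ᵥ x₀) * ‖x‖^2 ≤ _ := h3
      _ = x ⬝ᵥ s *ᵥ x := by field_simp

lemma quad_sub {g : ℕ} (A B : Matrix (Fin g) (Fin g) ℝ) (x : Fin g → ℝ) :
    x ⬝ᵥ (A - B) *ᵥ x = x ⬝ᵥ A *ᵥ x - x ⬝ᵥ B *ᵥ x := by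
  simp [sub_mulVec, dotProduct_sub]

lemma quad_smul' {g : ℕ} (A : Matrix (Fin g) (Fin g) ℝ) (a : ℝ) (x : Fin g → ℝ) :
    x ⬝ᵥ (a • A) *ᵥ x = a * (x ⬝ᵥ A *ᵥ x) := by
  simp [smul_mulVec, dotProduct_smul]

lemma psd_of_quad {g : ℕ} {M : Matrix (Fin g) (Fin g) ℝ} (h1 : M.IsHermitian)
    (h2 : ∀ x, 0 ≤ x ⬝ᵥ M *ᵥ x) : M.PosSemidef :=
  Matrix.PosSemidef.of_dotProduct_mulVec_nonneg h1 fun x => by simpa using h2 x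

lemma psd_smul {g : ℕ} {s : Matrix (Fin g) (Fin g) ℝ} (hs : s.PosSemidef) {a : ℝ}
    (ha : 0 ≤ a) : (a • s).PosSemidef := by
  refine psd_of_quad ?_ fun x => ?_
  · unfold Matrix.IsHermitian
    rw [conjTranspose_smul, hs.1]
    simp
  · rw [quad_smul']
    exact mul_nonneg ha (by simpa using hs.dotProduct_mulVec_nonneg x)

theorem typeOne_monotone_and_continuous' {g : ℕ} (hg : 1 ≤ g)
    (φ : Matrix (Fin g) (Fin g) ℝ → ℝ) (hφ : IsTypeOne φ) :
    (∀ s₁ s₂ : Matrix (Fin g) (Fin g) ℝ, s₁.PosSemidef → (s₂ - s₁).PosSemidef →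
      φ s₁ ≤ φ s₂) ∧
    ContinuousOn φ {s : Matrix (Fin g) (Fin g) ℝ | s.PosDef} := by
  have mono : ∀ s₁ s₂ : Matrix (Fin g) (Fin g) ℝ, s₁.PosSemidef →
      (s₂ - s₁).PosSemidef → φ s₁ ≤ φ s₂ := by
    intro s₁ s₂ h1 h2
    have := hφ.superadd s₁ (s₂ - s₁) h1 h2
    rw [add_sub_cancel] at this
    have h3 := hφ.nonneg (s₂ - s₁) h2
    linarith
  refine ⟨mono, ?_⟩
  intro s hs
  rw [ContinuousWithinAt, Metric.tendsto_nhds]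
  intro η hη
  obtain ⟨c, hc, hcq⟩ := quad_lower hg hs
  have hφs : 0 < φ s := hφ.pos s hs
  set ε : ℝ := min 1 (η / (2 * φ s)) with hεdef
  have hε0 : 0 < ε := lt_min one_pos (by positivity)
  have hε1 : ε ≤ 1 := min_le_left _ _
  have hεη : ε * φ s < η := by
    have : ε ≤ η / (2 * φ s) := min_le_right _ _
    have h2 : ε * φ s ≤ (η / (2 * φ s)) * φ s :=
      mul_le_mul_of_nonneg_right this hφs.le
    have h3 : (η / (2 * φ s)) * φ s = η / 2 := by field_simp
    nlinarith
  -- the open neighborhood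
  have hUopen : IsOpen {s' : Matrix (Fin g) (Fin g) ℝ | entSum (s' - s) < ε * c} := by
    have : Continuous fun s' : Matrix (Fin g) (Fin g) ℝ => entSum (s' - s) :=
      entSum_continuous.comp (continuous_id.sub continuous_const)
    exact isOpen_Iio.preimage this
  have hsU : s ∈ {s' : Matrix (Fin g) (Fin g) ℝ | entSum (s' - s) < ε * c} := by
    simp only [Set.mem_setOf_eq, sub_self]
    have : entSum (0 : Matrix (Fin g) (Fin g) ℝ) = 0 := by simp [entSum]
    rw [this]; positivity
  filter_upwards [mem_nhdsWithin_of_mem_nhds (hUopen.mem_nhds hsU),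
    self_mem_nhdsWithin] with s' hU' hs'
  -- key quadratic estimates
  have hkey : ∀ x : Fin g → ℝ, |x ⬝ᵥ (s' - s) *ᵥ x| ≤ ε * c * ‖x‖^2 := by
    intro x
    exact (quad_upper _ x).trans
      (mul_le_mul_of_nonneg_right hU'.le (by positivity))
  have hlow : (s' - (1 - ε) • s).PosSemidef := by
    refine psd_of_quad (hs'.isHermitian.sub ?_) fun x => ?_
    · unfold Matrix.IsHermitian; rw [conjTranspose_smul, hs.isHermitian]; simp
    · rw [quad_sub, quad_smul']
      have h1 : x ⬝ᵥ s' *ᵥ x = x ⬝ᵥ (s' - s) *ᵥ x + x ⬝ᵥ s *ᵥ x := by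
        rw [quad_sub]; ring
      have h2 := (abs_le.mp (hkey x)).1
      have h3 := hcq x
      nlinarith [mul_le_mul_of_nonneg_right hε1 (mul_nonneg hc.le (sq_nonneg ‖x‖))]
  have hhigh : ((1 + ε) • s - s').PosSemidef := by
    refine psd_of_quad (IsHermitian.sub ?_ hs'.isHermitian) fun x => ?_
    · unfold Matrix.IsHermitian; rw [conjTranspose_smul, hs.isHermitian]; simp
    · rw [quad_sub, quad_smul']
      have h1 : x ⬝ᵥ s' *ᵥ x = x ⬝ᵥ (s' - s) *ᵥ x + x ⬝ᵥ s *ᵥ x := by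
        rw [quad_sub]; ring
      have h2 := (abs_le.mp (hkey x)).2
      have h3 := hcq x
      nlinarith
  -- conclude
  have hPSDs : s.PosSemidef := hs.posSemidef
  have hlo : (1 - ε) * φ s ≤ φ s' := by
    have := mono ((1 - ε) • s) s' (psd_smul hPSDs (by linarith)) hlow
    rwa [hφ.homog (1 - ε) (by linarith) s hPSDs] at this
  have hhi : φ s' ≤ (1 + ε) * φ s := by
    have := mono s' ((1 + ε) • s) hs'.posSemidef hhigh
    rwa [hφ.homog (1 + ε) (by linarith) s hPSDs] at this
  rw [Real.dist_eq, abs_lt]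
  constructor <;> nlinarith

/-- A type one function is monotone for the Loewner order on the positive
semidefinite cone, and continuous on the positive definite cone. -/
theorem typeOne_monotone_and_continuous {g : ℕ} (hg : 1 ≤ g)
    (φ : Matrix (Fin g) (Fin g) ℝ → ℝ) (hφ : IsTypeOne φ) :
    (∀ s₁ s₂ : Matrix (Fin g) (Fin g) ℝ, s₁.PosSemidef → (s₂ - s₁).PosSemidef →
      φ s₁ ≤ φ s₂) ∧
    ContinuousOn φ {s : Matrix (Fin g) (Fin g) ℝ | s.PosDef} :=
  typeOne_monotone_and_continuous' hg φ hφ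
end

section
/- The symplectic group Γ_g = Sp(2g,ℤ) acts on 𝔽₂^{2g} by [a;b]·γ = γᵀ[a;b] + ε(γ), where for γ = [[A,B],[C,D]], ε(γ) = [(AᵀC)₀; (BᵀD)₀] (diagonals of AᵀC and BᵀD reduced mod 2). That is, this formula defines a right group action: ζ·1 = ζ and (ζ·γ₁)·γ₂ = ζ·(γ₁γ₂). -/
open Matrix

/-- The diagonal-shift characteristic `ε(γ) = [(AᵀC)₀ ; (BᵀD)₀]` (mod 2) of a
symplectic matrix written in `g × g` blocks `[[A,B],[C,D]]`. -/
def epsChar {g : ℕ} (γ : Matrix (Fin g ⊕ Fin g) (Fin g ⊕ Fin g) ℤ) :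
    (Fin g ⊕ Fin g) → ZMod 2 :=
  Sum.elim (fun i => (((γ.toBlocks₁₁)ᵀ * γ.toBlocks₂₁).diag i : ZMod 2))
    (fun i => (((γ.toBlocks₁₂)ᵀ * γ.toBlocks₂₂).diag i : ZMod 2))

/-- The affine action `ζ · γ = γᵀ ζ + ε(γ)` of `Sp(2g, ℤ)` on characteristics
`ζ ∈ 𝔽₂^{2g}`. -/
def charAct {g : ℕ} (γ : Matrix (Fin g ⊕ Fin g) (Fin g ⊕ Fin g) ℤ)
    (ζ : (Fin g ⊕ Fin g) → ZMod 2) : (Fin g ⊕ Fin g) → ZMod 2 :=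
  (γ.map (Int.cast : ℤ → ZMod 2))ᵀ.mulVec ζ + epsChar γ

lemma zmod2_mul_self (x : ZMod 2) : x * x = x := by revert x; decide

lemma zmod2_add_self (x : ZMod 2) : x + x = 0 := by revert x; decide

/-- In characteristic 2, the diagonal of a symmetric-conjugate is linear. -/
lemma diag_conj {g : ℕ} (P M : Matrix (Fin g) (Fin g) (ZMod 2)) (hM : Mᵀ = M) :
    (Pᵀ * M * P).diag = Pᵀ.mulVec M.diag := by
  funext i
  have expand : (Pᵀ * M * P).diag i
      = ∑ p ∈ (Finset.univ ×ˢ Finset.univ : Finset (Fin g × Fin g)),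
          P p.1 i * M p.1 p.2 * P p.2 i := by
    rw [Matrix.mul_assoc]
    simp only [Matrix.diag_apply, Matrix.mul_apply, Matrix.transpose_apply, Finset.mul_sum]
    rw [Finset.sum_product]
    apply Finset.sum_congr rfl; intro j _
    apply Finset.sum_congr rfl; intro k _
    ring
  rw [expand]
  rw [← Finset.sum_filter_add_sum_filter_not _ (fun p : Fin g × Fin g => p.1 = p.2)]
  have h1 : ∑ p ∈ (Finset.univ ×ˢ Finset.univ).filter (fun p : Fin g × Fin g => p.1 = p.2),
      P p.1 i * M p.1 p.2 * P p.2 i = ∑ j, P j i * M j j := by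
    rw [Finset.sum_filter, Finset.sum_product]
    apply Finset.sum_congr rfl; intro j _
    simp only
    rw [Finset.sum_ite_eq Finset.univ j (fun k => P j i * M j k * P k i)]
    simp only [Finset.mem_univ, if_true]
    rw [mul_comm (P j i) (M j j), mul_assoc, zmod2_mul_self, mul_comm]
  have h2 : ∑ p ∈ (Finset.univ ×ˢ Finset.univ).filter (fun p : Fin g × Fin g => ¬ p.1 = p.2),
      P p.1 i * M p.1 p.2 * P p.2 i = 0 := by
    refine Finset.sum_involution (fun p _ => p.swap) ?_ ?_ ?_ ?_
    · intro p hp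
      have hsym : M p.1 p.2 = M p.2 p.1 := congrFun (congrFun hM p.2) p.1
      simp only [Prod.fst_swap, Prod.snd_swap]
      rw [← hsym, show P p.2 i * M p.1 p.2 * P p.1 i = P p.1 i * M p.1 p.2 * P p.2 i from by ring]
      exact zmod2_add_self _
    · intro p hp _
      intro h
      simp only [Finset.mem_filter] at hp
      exact hp.2 ((Prod.ext_iff.mp h).2.symm ▸ rfl)
    · intro p hp
      simp only [Finset.mem_filter, Finset.mem_product, Finset.mem_univ, true_and,
        Prod.fst_swap, Prod.snd_swap] at hp ⊢
      exact fun h => hp h.symm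
    · intro p hp
      exact Prod.swap_swap p
  rw [h1, h2, add_zero]
  simp [Matrix.mulVec, dotProduct, Matrix.diag]

lemma key_diag {g : ℕ} (a b c d p q : Matrix (Fin g) (Fin g) (ZMod 2))
    (h1 : cᵀ * a = aᵀ * c) (h2 : dᵀ * b = bᵀ * d) (h3 : aᵀ * d + cᵀ * b = 1) :
    ((a * p + b * q)ᵀ * (c * p + d * q)).diag
      = pᵀ.mulVec (aᵀ * c).diag + qᵀ.mulVec (bᵀ * d).diag + (pᵀ * q).diag := by
  have e : (a * p + b * q)ᵀ * (c * p + d * q)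
      = pᵀ * (aᵀ * c) * p + qᵀ * (bᵀ * d) * q + (pᵀ * (aᵀ * d) * q + qᵀ * (bᵀ * c) * p) := by
    simp only [Matrix.transpose_add, Matrix.transpose_mul]
    noncomm_ring
  have hsym1 : (aᵀ * c)ᵀ = aᵀ * c := by
    rw [Matrix.transpose_mul, Matrix.transpose_transpose, h1]
  have hsym2 : (bᵀ * d)ᵀ = bᵀ * d := by
    rw [Matrix.transpose_mul, Matrix.transpose_transpose, h2]
  have hswap : (qᵀ * (bᵀ * c) * p).diag = (pᵀ * (cᵀ * b) * q).diag := by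
    rw [show pᵀ * (cᵀ * b) * q = (qᵀ * (bᵀ * c) * p)ᵀ by
      simp [Matrix.transpose_mul, Matrix.mul_assoc], Matrix.diag_transpose]
  have cross : (pᵀ * (aᵀ * d) * q).diag + (qᵀ * (bᵀ * c) * p).diag = (pᵀ * q).diag := by
    rw [hswap, ← Matrix.diag_add, ← Matrix.add_mul, ← Matrix.mul_add, h3, Matrix.mul_one]
  rw [e, Matrix.diag_add, Matrix.diag_add, Matrix.diag_add,
    diag_conj p (aᵀ * c) hsym1, diag_conj q (bᵀ * d) hsym2, cross]

lemma mat_sub_eq_add {g : ℕ} (M N : Matrix (Fin g) (Fin g) (ZMod 2)) : M - N = M + N := by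
  ext i j
  simp only [Matrix.sub_apply, Matrix.add_apply]
  revert i j
  have : ∀ x y : ZMod 2, x - y = x + y := by decide
  intro i j; exact this _ _

lemma mat_eq_of_add_eq_zero {g : ℕ} {M N : Matrix (Fin g) (Fin g) (ZMod 2)}
    (h : M + N = 0) : M = N := by
  ext i j
  have h' := congrFun (congrFun h i) j
  have : ∀ x y : ZMod 2, x + y = 0 → x = y := by decide
  exact this _ _ h'

lemma blocks_symp {g : ℕ} (a b c d : Matrix (Fin g) (Fin g) (ZMod 2))
    (hm : (Matrix.fromBlocks a b c d)ᵀ * (Matrix.fromBlocks 0 (-1) 1 0)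
        * (Matrix.fromBlocks a b c d) = Matrix.fromBlocks 0 (-1) 1 0) :
    cᵀ * a = aᵀ * c ∧ dᵀ * b = bᵀ * d ∧ aᵀ * d + cᵀ * b = 1 := by
  rw [Matrix.fromBlocks_transpose, Matrix.fromBlocks_multiply, Matrix.fromBlocks_multiply] at hm
  have h11 := congrArg Matrix.toBlocks₁₁ hm
  have h12 := congrArg Matrix.toBlocks₁₂ hm
  have h22 := congrArg Matrix.toBlocks₂₂ hm
  simp only [Matrix.toBlocks_fromBlocks₁₁, Matrix.toBlocks_fromBlocks₁₂,
    Matrix.toBlocks_fromBlocks₂₂, Matrix.mul_zero, zero_add, Matrix.mul_one,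
    add_zero, mul_neg_one, Matrix.mul_zero, zero_add, add_zero, mul_zero, mul_one]
    at h11 h12 h22
  refine ⟨by rwa [neg_mul, add_neg_eq_zero] at h11, by rwa [neg_mul, add_neg_eq_zero] at h22, ?_⟩
  rw [neg_mul, ← sub_eq_add_neg] at h12
  have h : aᵀ * d - cᵀ * b = 1 := by rw [← neg_sub, h12, neg_neg]
  rwa [mat_sub_eq_add] at h

/-- `epsChar` for matrices already reduced mod 2. -/
def eps2 {g : ℕ} (m : Matrix (Fin g ⊕ Fin g) (Fin g ⊕ Fin g) (ZMod 2)) :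
    (Fin g ⊕ Fin g) → ZMod 2 :=
  Sum.elim (((m.toBlocks₁₁)ᵀ * m.toBlocks₂₁).diag) (((m.toBlocks₁₂)ᵀ * m.toBlocks₂₂).diag)

lemma cast_diag {g : ℕ} (A C : Matrix (Fin g) (Fin g) ℤ) (i : Fin g) :
    (((Aᵀ * C).diag i : ℤ) : ZMod 2)
      = ((A.map (Int.cast : ℤ → ZMod 2))ᵀ * (C.map (Int.cast : ℤ → ZMod 2))).diag i := by
  simp only [Matrix.diag_apply, Matrix.mul_apply, Matrix.transpose_apply, Matrix.map_apply]
  push_cast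
  rfl

lemma epsChar_eq {g : ℕ} (γ : Matrix (Fin g ⊕ Fin g) (Fin g ⊕ Fin g) ℤ) :
    epsChar γ = eps2 (γ.map (Int.cast : ℤ → ZMod 2)) := by
  funext x
  cases x with
  | inl i => exact cast_diag _ _ i
  | inr i => exact cast_diag _ _ i

lemma eps2_mul {g : ℕ} (a b c d p q r s : Matrix (Fin g) (Fin g) (ZMod 2))
    (h1 : cᵀ * a = aᵀ * c) (h2 : dᵀ * b = bᵀ * d) (h3 : aᵀ * d + cᵀ * b = 1) :
    eps2 (Matrix.fromBlocks a b c d * Matrix.fromBlocks p q r s)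
      = (Matrix.fromBlocks p q r s)ᵀ.mulVec (eps2 (Matrix.fromBlocks a b c d))
        + eps2 (Matrix.fromBlocks p q r s) := by
  rw [Matrix.fromBlocks_multiply, Matrix.fromBlocks_transpose]
  funext x
  have hu : eps2 (Matrix.fromBlocks a b c d)
      = Sum.elim ((aᵀ * c).diag) ((bᵀ * d).diag) := by
    simp [eps2, Matrix.toBlocks_fromBlocks₁₁, Matrix.toBlocks_fromBlocks₂₁,
      Matrix.toBlocks_fromBlocks₁₂, Matrix.toBlocks_fromBlocks₂₂]
  rw [hu, Matrix.fromBlocks_mulVec, Sum.elim_comp_inl, Sum.elim_comp_inr]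
  cases x with
  | inl i =>
    simp only [eps2, Sum.elim_inl, Matrix.toBlocks_fromBlocks₁₁, Matrix.toBlocks_fromBlocks₂₁,
      Pi.add_apply]
    exact congrFun (key_diag a b c d p r h1 h2 h3) i
  | inr i =>
    simp only [eps2, Sum.elim_inr, Matrix.toBlocks_fromBlocks₁₂, Matrix.toBlocks_fromBlocks₂₂,
      Pi.add_apply]
    exact congrFun (key_diag a b c d q s h1 h2 h3) i

lemma symp_mod2 {g : ℕ} {γ : Matrix (Fin g ⊕ Fin g) (Fin g ⊕ Fin g) ℤ}
    (h : γ ∈ Matrix.symplecticGroup (Fin g) ℤ) :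
    (γ.map (Int.cast : ℤ → ZMod 2))ᵀ * (Matrix.fromBlocks 0 (-1) 1 0)
      * (γ.map (Int.cast : ℤ → ZMod 2)) = Matrix.fromBlocks 0 (-1) 1 0 := by
  have hJ : (Matrix.J (Fin g) ℤ).map (Int.cast : ℤ → ZMod 2)
      = Matrix.fromBlocks 0 (-1) 1 0 := by
    ext i j
    cases i <;> cases j <;>
      simp [Matrix.J, Matrix.fromBlocks, Matrix.map_apply, Matrix.one_apply,
        apply_ite (Int.cast : ℤ → ZMod 2)]
  have h' := (SymplecticGroup.mem_iff' (A := γ)).mp h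
  have e1 : (γᵀ * Matrix.J (Fin g) ℤ * γ).map (Int.cast : ℤ → ZMod 2)
      = (γ.map (Int.cast : ℤ → ZMod 2))ᵀ * (Matrix.J (Fin g) ℤ).map (Int.cast : ℤ → ZMod 2)
        * γ.map (Int.cast : ℤ → ZMod 2) := by
    rw [show (Int.cast : ℤ → ZMod 2) = ⇑(Int.castRingHom (ZMod 2)) from rfl,
      Matrix.map_mul, Matrix.map_mul, Matrix.transpose_map]
  have this2 := e1.symm.trans (congrArg (fun M => M.map (Int.cast : ℤ → ZMod 2)) h')
  rwa [hJ] at this2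

/-- The formula `ζ · γ = γᵀ ζ + ε(γ)` defines a right action of the integral
symplectic group `Sp(2g, ℤ)` on the characteristics `𝔽₂^{2g}`. -/
theorem charAct_is_right_action {g : ℕ} :
    (∀ ζ : (Fin g ⊕ Fin g) → ZMod 2, charAct (1 : Matrix (Fin g ⊕ Fin g) (Fin g ⊕ Fin g) ℤ) ζ = ζ) ∧
    (∀ γ₁ γ₂ : Matrix (Fin g ⊕ Fin g) (Fin g ⊕ Fin g) ℤ,
      γ₁ ∈ Matrix.symplecticGroup (Fin g) ℤ → γ₂ ∈ Matrix.symplecticGroup (Fin g) ℤ →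
      ∀ ζ : (Fin g ⊕ Fin g) → ZMod 2,
        charAct (γ₁ * γ₂) ζ = charAct γ₂ (charAct γ₁ ζ)) := by
  constructor
  · intro ζ
    have heps : epsChar (1 : Matrix (Fin g ⊕ Fin g) (Fin g ⊕ Fin g) ℤ) = 0 := by
      funext x
      cases x with
      | inl i =>
        simp [epsChar, Matrix.toBlocks₁₁, Matrix.toBlocks₂₁, Matrix.one_apply,
          Matrix.mul_apply, Matrix.diag]
      | inr i =>
        simp [epsChar, Matrix.toBlocks₁₂, Matrix.toBlocks₂₂, Matrix.one_apply,
          Matrix.mul_apply, Matrix.diag]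
    rw [charAct, heps, add_zero, Matrix.map_one _ Int.cast_zero Int.cast_one,
      Matrix.transpose_one, Matrix.one_mulVec]
  · intro γ₁ γ₂ hγ₁ hγ₂ ζ
    set c := (Int.cast : ℤ → ZMod 2)
    set m₁ := γ₁.map c with hm₁def
    set m₂ := γ₂.map c with hm₂def
    have hmap : (γ₁ * γ₂).map c = m₁ * m₂ := Matrix.map_mul (f := Int.castRingHom (ZMod 2))
    obtain ⟨h1, h2, h3⟩ := blocks_symp m₁.toBlocks₁₁ m₁.toBlocks₁₂ m₁.toBlocks₂₁ m₁.toBlocks₂₂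
      (by rw [Matrix.fromBlocks_toBlocks]; exact symp_mod2 hγ₁)
    have keyeps : eps2 (m₁ * m₂) = m₂ᵀ.mulVec (eps2 m₁) + eps2 m₂ := by
      rw [← Matrix.fromBlocks_toBlocks m₁, ← Matrix.fromBlocks_toBlocks m₂]
      exact eps2_mul _ _ _ _ _ _ _ _ h1 h2 h3
    rw [charAct, charAct, charAct, epsChar_eq, epsChar_eq, epsChar_eq, hmap, keyeps]
    rw [Matrix.mulVec_add, Matrix.mulVec_mulVec, ← Matrix.transpose_mul]
    abel
end

section
/- The theta group Γ_g(1,2) = {γ = [[A,B],[C,D]] ∈ Sp(2g,ℤ) : (ABᵀ)₀ ≡ (CDᵀ)₀ ≡ 0 mod 2} is exactly the stabilizer of the zero characteristic [0;0] ∈ 𝔽₂^{2g} under the affine action ζ·γ = γᵀζ + [(AᵀC)₀; (BᵀD)₀] of Sp(2g,ℤ) on 𝔽₂^{2g}. -/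
open Matrix

/-- The theta group `Γ_g(1,2)`: integral symplectic matrices `[[A,B],[C,D]]`
with `(ABᵀ)₀ ≡ (CDᵀ)₀ ≡ 0 mod 2`. -/
def thetaGroupSet (g : ℕ) : Set (Matrix (Fin g ⊕ Fin g) (Fin g ⊕ Fin g) ℤ) :=
  {γ | γ ∈ Matrix.symplecticGroup (Fin g) ℤ ∧
    (∀ i, (2 : ℤ) ∣ (γ.toBlocks₁₁ * (γ.toBlocks₁₂)ᵀ).diag i) ∧
    (∀ i, (2 : ℤ) ∣ (γ.toBlocks₂₁ * (γ.toBlocks₂₂)ᵀ).diag i)}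

namespace ThetaAux

variable {g : ℕ}

private lemma zsq (z : ZMod 2) : z * z = z := by revert z; decide
private lemma zadd (z : ZMod 2) : z + z = 0 := by revert z; decide

/-- A double sum of a symmetric function over `ZMod 2` collapses to the diagonal. -/
private lemma double_sum_symm (f : Fin g → Fin g → ZMod 2) (hf : ∀ j k, f j k = f k j) :
    ∑ j, ∑ k, f j k = ∑ j, f j j := by
  classical
  have h1 : ∑ j, ∑ k, f j k = ∑ p ∈ Finset.univ ×ˢ Finset.univ, f p.1 p.2 := by
    rw [Finset.sum_product]
  rw [h1, ← Finset.sum_filter_add_sum_filter_not (Finset.univ ×ˢ Finset.univ)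
      (fun p => p.1 = p.2)]
  have h2 : ∑ p ∈ (Finset.univ ×ˢ Finset.univ).filter (fun p => ¬ p.1 = p.2),
      f p.1 p.2 = 0 := by
    apply Finset.sum_involution (fun p _ => (p.2, p.1))
    · intro p hp
      simp only
      rw [hf p.2 p.1]; exact zadd _
    · intro p hp _
      simp only [Finset.mem_filter] at hp
      intro h
      exact hp.2 (congrArg Prod.fst h).symm
    · intro p hp
      simp only [Finset.mem_filter, Finset.mem_product, Finset.mem_univ, true_and] at hp ⊢
      exact fun h => hp h.symm
    · intro p hp; rfl
  rw [h2, add_zero]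
  rw [Finset.sum_filter]
  rw [Finset.sum_product]
  congr 1
  ext j
  simp

/-- Mod 2, the diagonal of `MᵀSM` for symmetric `S` is `Mᵀ` applied to the
diagonal of `S`. -/
private lemma diag_conj (M S : Matrix (Fin g) (Fin g) (ZMod 2)) (hS : Sᵀ = S) (i : Fin g) :
    (Mᵀ * S * M).diag i = ∑ j, M j i * S.diag j := by
  have h : (Mᵀ * S * M).diag i = ∑ k, ∑ j, (M j i * S j k) * M k i := by
    simp [Matrix.diag, Matrix.mul_apply, Finset.sum_mul]
  rw [h, Finset.sum_comm]
  rw [double_sum_symm (fun j k => (M j i * S j k) * M k i)]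
  · apply Finset.sum_congr rfl
    intro j _
    simp only [Matrix.diag]
    ring_nf
    rw [pow_two, zsq]
  · intro j k
    have hsk : S j k = S k j := by
      conv_rhs => rw [← hS]
      simp [Matrix.transpose_apply]
    rw [hsk]; ring

/-- Key identity: mod 2, for blocks of a symplectic matrix,
`diag(aᵀc) = aᵀ diag(cdᵀ) + cᵀ diag(abᵀ)`. -/
private lemma key (a b c d : Matrix (Fin g) (Fin g) (ZMod 2))
    (hab : (a * bᵀ)ᵀ = a * bᵀ) (hcd : (c * dᵀ)ᵀ = c * dᵀ)
    (hac : (aᵀ * c)ᵀ = aᵀ * c) (h1 : dᵀ * a + bᵀ * c = 1) (i : Fin g) :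
    (aᵀ * c).diag i = ∑ j, a j i * (c * dᵀ).diag j + ∑ j, c j i * (a * bᵀ).diag j := by
  have e1 : aᵀ * c = aᵀ * (c * dᵀ) * a + cᵀ * (a * bᵀ) * c := by
    have h2 : aᵀ * c = aᵀ * c * (dᵀ * a) + (aᵀ * c) * (bᵀ * c) := by
      rw [← mul_add, h1, mul_one]
    rw [h2]
    have h3 : (aᵀ * c) * (bᵀ * c) = cᵀ * (a * bᵀ) * c := by
      rw [← hac]
      simp only [Matrix.transpose_mul, Matrix.transpose_transpose]
      noncomm_ring
    rw [h3]
    noncomm_ring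
  rw [e1]
  have : (aᵀ * (c * dᵀ) * a + cᵀ * (a * bᵀ) * c).diag i
      = (aᵀ * (c * dᵀ) * a).diag i + (cᵀ * (a * bᵀ) * c).diag i := rfl
  rw [this, diag_conj a (c * dᵀ) hcd i, diag_conj c (a * bᵀ) hab i]

end ThetaAux

open ThetaAux in
/-- The theta group `Γ_g(1,2)` is exactly the stabilizer of the zero
characteristic `[0;0] ∈ 𝔽₂^{2g}` under the affine action of `Sp(2g, ℤ)`. -/
theorem thetaGroup_eq_stabilizer_of_zero {g : ℕ} :
    thetaGroupSet g =
      {γ | γ ∈ Matrix.symplecticGroup (Fin g) ℤ ∧ charAct γ (0 : (Fin g ⊕ Fin g) → ZMod 2) = 0} := by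
  classical
  ext γ
  simp only [thetaGroupSet, Set.mem_setOf_eq]
  apply and_congr_right
  intro hγ
  set f : ℤ →+* ZMod 2 := Int.castRingHom (ZMod 2) with hf
  set a := γ.toBlocks₁₁.map ⇑f with ha
  set b := γ.toBlocks₁₂.map ⇑f with hb
  set c := γ.toBlocks₂₁.map ⇑f with hc
  set d := γ.toBlocks₂₂.map ⇑f with hd
  have mneg : ∀ X : Matrix (Fin g) (Fin g) (ZMod 2), -X = X := by
    intro X; ext i j
    have : ∀ z : ZMod 2, -z = z := by decide
    simp [this]
  have hJmap : (Matrix.J (Fin g) ℤ).map ⇑f = Matrix.J (Fin g) (ZMod 2) := by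
    unfold Matrix.J
    ext (i | i) (j | j) <;>
      simp [Matrix.fromBlocks, Matrix.map_apply, Matrix.one_apply, apply_ite]
  have hM2 : γ.map ⇑f ∈ Matrix.symplecticGroup (Fin g) (ZMod 2) := by
    rw [SymplecticGroup.mem_iff]
    rw [← hJmap, ← Matrix.transpose_map, ← Matrix.map_mul, ← Matrix.map_mul]
    rw [SymplecticGroup.mem_iff.mp hγ]
  have hblocks : γ.map ⇑f = Matrix.fromBlocks a b c d := by
    rw [← Matrix.fromBlocks_toBlocks (γ.map ⇑f)]; rfl
  have h1 : Matrix.fromBlocks a b c d * Matrix.J (Fin g) (ZMod 2)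
      * (Matrix.fromBlocks a b c d)ᵀ = Matrix.J (Fin g) (ZMod 2) := by
    rw [← hblocks]; exact SymplecticGroup.mem_iff.mp hM2
  have h2 : (Matrix.fromBlocks a b c d)ᵀ * Matrix.J (Fin g) (ZMod 2)
      * Matrix.fromBlocks a b c d = Matrix.J (Fin g) (ZMod 2) := by
    rw [← hblocks]; exact SymplecticGroup.mem_iff'.mp hM2
  unfold Matrix.J at h1 h2
  rw [Matrix.fromBlocks_transpose, Matrix.fromBlocks_multiply, Matrix.fromBlocks_multiply]
    at h1 h2
  simp only [Matrix.mul_zero, Matrix.zero_mul, Matrix.mul_one, Matrix.one_mul, Matrix.mul_neg,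
    Matrix.neg_mul, mneg, add_zero, zero_add] at h1 h2
  have sum0 : ∀ X Y : Matrix (Fin g) (Fin g) (ZMod 2), X + Y = 0 → X = Y := by
    intro X Y h
    rw [← mneg Y]
    exact eq_neg_of_add_eq_zero_left h
  -- extract the block relations
  have e11 := congrArg Matrix.toBlocks₁₁ h1
  have e12 := congrArg Matrix.toBlocks₁₂ h1
  have e21 := congrArg Matrix.toBlocks₂₁ h1
  have e22 := congrArg Matrix.toBlocks₂₂ h1
  have g11 := congrArg Matrix.toBlocks₁₁ h2
  have g12 := congrArg Matrix.toBlocks₁₂ h2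
  have g21 := congrArg Matrix.toBlocks₂₁ h2
  have g22 := congrArg Matrix.toBlocks₂₂ h2
  simp only [Matrix.toBlocks_fromBlocks₁₁, Matrix.toBlocks_fromBlocks₁₂,
    Matrix.toBlocks_fromBlocks₂₁, Matrix.toBlocks_fromBlocks₂₂] at e11 e12 e21 e22 g11 g12 g21 g22
  have r1 : a * bᵀ = b * aᵀ := (sum0 _ _ e11).symm
  have r2 : c * dᵀ = d * cᵀ := (sum0 _ _ e22).symm
  have r3 : b * cᵀ + a * dᵀ = 1 := e12
  have r8 : d * aᵀ + c * bᵀ = 1 := e21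
  have r4 : aᵀ * c = cᵀ * a := (sum0 _ _ g11).symm
  have r5 : bᵀ * d = dᵀ * b := (sum0 _ _ g22).symm
  have r7 : cᵀ * b + aᵀ * d = 1 := g12
  have r6 : dᵀ * a + bᵀ * c = 1 := g21
  -- the four instances of the key identity
  have k1 : ∀ i, (aᵀ * c).diag i
      = ∑ j, a j i * (c * dᵀ).diag j + ∑ j, c j i * (a * bᵀ).diag j := by
    intro i
    apply key a b c d _ _ _ r6 i
    · rw [Matrix.transpose_mul, Matrix.transpose_transpose, r1]
    · rw [Matrix.transpose_mul, Matrix.transpose_transpose, r2]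
    · rw [Matrix.transpose_mul, Matrix.transpose_transpose, r4]
  have k2 : ∀ i, (bᵀ * d).diag i
      = ∑ j, b j i * (d * cᵀ).diag j + ∑ j, d j i * (b * aᵀ).diag j := by
    intro i
    apply key b a d c _ _ _ r7 i
    · rw [Matrix.transpose_mul, Matrix.transpose_transpose, ← r1]
    · rw [Matrix.transpose_mul, Matrix.transpose_transpose, ← r2]
    · rw [Matrix.transpose_mul, Matrix.transpose_transpose, r5]
  have k3 : ∀ i, (a * bᵀ).diag i
      = ∑ j, a i j * (bᵀ * d).diag j + ∑ j, b i j * (aᵀ * c).diag j := by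
    intro i
    have := key aᵀ cᵀ bᵀ dᵀ ?_ ?_ ?_ ?_ i
    · simpa only [Matrix.transpose_transpose, Matrix.transpose_apply] using this
    · simp only [Matrix.transpose_mul, Matrix.transpose_transpose]; exact r4.symm
    · simp only [Matrix.transpose_mul, Matrix.transpose_transpose]; exact r5.symm
    · simp only [Matrix.transpose_mul, Matrix.transpose_transpose]; exact r1.symm
    · simp only [Matrix.transpose_transpose]
      exact r8
  have k4 : ∀ i, (c * dᵀ).diag i
      = ∑ j, c i j * (dᵀ * b).diag j + ∑ j, d i j * (cᵀ * a).diag j := by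
    intro i
    have := key cᵀ aᵀ dᵀ bᵀ ?_ ?_ ?_ ?_ i
    · simpa only [Matrix.transpose_transpose, Matrix.transpose_apply] using this
    · simp only [Matrix.transpose_mul, Matrix.transpose_transpose]; exact r4
    · simp only [Matrix.transpose_mul, Matrix.transpose_transpose]; exact r5
    · simp only [Matrix.transpose_mul, Matrix.transpose_transpose]; exact r2.symm
    · simp only [Matrix.transpose_transpose]
      exact r3
  -- translate both sides
  have hdvd : ∀ n : ℤ, (2 : ℤ) ∣ n ↔ ((n : ZMod 2) = 0) := by
    intro n
    rw [ZMod.intCast_zmod_eq_zero_iff_dvd]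
    norm_num
  have cast1 : ∀ i, ((γ.toBlocks₁₁ * (γ.toBlocks₁₂)ᵀ).diag i : ZMod 2) = (a * bᵀ).diag i := by
    intro i
    rw [ha, hb, ← Matrix.transpose_map, ← Matrix.map_mul]
    rfl
  have cast2 : ∀ i, ((γ.toBlocks₂₁ * (γ.toBlocks₂₂)ᵀ).diag i : ZMod 2) = (c * dᵀ).diag i := by
    intro i
    rw [hc, hd, ← Matrix.transpose_map, ← Matrix.map_mul]
    rfl
  have cast3 : ∀ i, (((γ.toBlocks₁₁)ᵀ * γ.toBlocks₂₁).diag i : ZMod 2) = (aᵀ * c).diag i := by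
    intro i
    rw [ha, hc, ← Matrix.transpose_map, ← Matrix.map_mul]
    rfl
  have cast4 : ∀ i, (((γ.toBlocks₁₂)ᵀ * γ.toBlocks₂₂).diag i : ZMod 2) = (bᵀ * d).diag i := by
    intro i
    rw [hb, hd, ← Matrix.transpose_map, ← Matrix.map_mul]
    rfl
  have hRHS : charAct γ (0 : (Fin g ⊕ Fin g) → ZMod 2) = 0
      ↔ (∀ i, (aᵀ * c).diag i = 0) ∧ (∀ i, (bᵀ * d).diag i = 0) := by
    unfold charAct
    rw [Matrix.mulVec_zero, zero_add]
    unfold epsChar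
    constructor
    · intro h
      constructor
      · intro i
        rw [← cast3 i]
        exact congrFun h (Sum.inl i)
      · intro i
        rw [← cast4 i]
        exact congrFun h (Sum.inr i)
    · intro ⟨h1, h2⟩
      funext x
      cases x with
      | inl i =>
        show (((γ.toBlocks₁₁)ᵀ * γ.toBlocks₂₁).diag i : ZMod 2) = 0
        exact (cast3 i).trans (h1 i)
      | inr i =>
        show (((γ.toBlocks₁₂)ᵀ * γ.toBlocks₂₂).diag i : ZMod 2) = 0
        exact (cast4 i).trans (h2 i)
  rw [hRHS]
  constructor
  · rintro ⟨hu, hv⟩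
    have hu' : ∀ i, (a * bᵀ).diag i = 0 := fun i => by rw [← cast1 i, ← hdvd]; exact hu i
    have hv' : ∀ i, (c * dᵀ).diag i = 0 := fun i => by rw [← cast2 i, ← hdvd]; exact hv i
    have hu2 : ∀ j, (a * bᵀ) j j = 0 := hu'
    have hv2 : ∀ j, (c * dᵀ) j j = 0 := hv'
    constructor
    · intro i
      rw [k1 i]
      simp [hu2, hv2]
    · intro i
      rw [k2 i, ← r1, ← r2]
      simp [hu2, hv2]
  · rintro ⟨hx, hy⟩
    have hx2 : ∀ j, (aᵀ * c) j j = 0 := hx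
    have hy2 : ∀ j, (bᵀ * d) j j = 0 := hy
    constructor
    · intro i
      rw [hdvd, cast1 i, k3 i]
      simp [hx2, hy2]
    · intro i
      rw [hdvd, cast2 i, k4 i, ← r4, ← r5]
      simp [hx2, hy2]
end

section
/- Sp(2g,ℤ) decomposes into exactly two double cosets with respect to Γ_g(1,2) and the Siegel parabolic Δ_g(ℤ) = {γ ∈ Sp(2g,ℤ) : C = 0}: namely Γ_g(1,2)·Δ_g(ℤ) and Γ_g(1,2)·[[I,0],[I,I]]·Δ_g(ℤ). The first double coset contains 2^g single cosets of Γ_g(1,2), the second contains 2^{g-1}(2^g - 1). -/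
open Matrix

/-- The Siegel parabolic `Δ_g(ℤ)`: integral symplectic matrices with lower left
block `C = 0`. -/
def siegelParabolicSet (g : ℕ) : Set (Matrix (Fin g ⊕ Fin g) (Fin g ⊕ Fin g) ℤ) :=
  {γ | γ ∈ Matrix.symplecticGroup (Fin g) ℤ ∧ γ.toBlocks₂₁ = 0}

/-- The matrix `M = [[I,0],[I,I]]`. -/
def lowerM (g : ℕ) : Matrix (Fin g ⊕ Fin g) (Fin g ⊕ Fin g) ℤ :=
  Matrix.fromBlocks 1 0 1 1

namespace DCD
open Finset
set_option linter.unusedSectionVars false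
set_option linter.unusedVariables false
set_option linter.unreachableTactic false
set_option linter.unusedTactic false
set_option maxHeartbeats 1000000

variable {n : Type*} [Fintype n] [DecidableEq n]

lemma add_self (x : ZMod 2) : x + x = 0 := by revert x; decide
lemma sq_eq (x : ZMod 2) : x * x = x := by revert x; decide
lemma val_intCast (x : ZMod 2) : (((x.val : ℤ)) : ZMod 2) = x := by revert x; decide
lemma ne_zero_eq_one {x : ZMod 2} (h : x ≠ 0) : x = 1 := by revert h; revert x; decide

lemma sum_sym {α : Type*} [Fintype α] [DecidableEq α] (f : α → α → ZMod 2)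
    (hf : ∀ j k, f j k = f k j) : ∑ j, ∑ k, f j k = ∑ j, f j j := by
  have h4 : (∑ p : α × α, if p.1 = p.2 then 0 else f p.1 p.2) = 0 := by
    refine Finset.sum_involution (fun p _ => p.swap) ?_ ?_ (fun p _ => Finset.mem_univ _) ?_
    · intro p _
      by_cases h : p.1 = p.2
      · simp [h]
      · have h' : ¬ p.2 = p.1 := fun hh => h hh.symm
        simp only [h, h', if_neg, Prod.fst_swap, Prod.snd_swap, if_false]
        rw [hf p.1 p.2]; exact add_self _
    · intro p _ hne hswap
      have h21 : p.2 = p.1 := congrArg Prod.fst hswap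
      exact hne (if_pos h21.symm)
    · intro p _; rfl
  have h1 : (∑ p : α × α, f p.1 p.2) = ∑ j, ∑ k, f j k := Fintype.sum_prod_type _
  have h2 : (∑ p : α × α, f p.1 p.2)
      = (∑ p : α × α, if p.1 = p.2 then f p.1 p.2 else 0)
        + ∑ p : α × α, if p.1 = p.2 then 0 else f p.1 p.2 := by
    rw [← Finset.sum_add_distrib]
    apply Finset.sum_congr rfl
    intro p _
    by_cases h : p.1 = p.2 <;> simp [h]
  have h3 : (∑ p : α × α, if p.1 = p.2 then f p.1 p.2 else 0) = ∑ j, f j j := by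
    rw [Fintype.sum_prod_type]
    apply Finset.sum_congr rfl
    intro j _
    simp
  rw [← h1, h2, h3, h4, add_zero]
lemma symm_apply {S : Matrix n n (ZMod 2)} (hS : Sᵀ = S) (j k : n) : S j k = S k j := by
  nth_rewrite 1 [← hS]; exact Matrix.transpose_apply _ _ _

lemma diag_conj (X S : Matrix n n (ZMod 2)) (hS : Sᵀ = S) :
    (X * S * Xᵀ).diag = X *ᵥ S.diag := by
  funext i
  have : (X * S * Xᵀ).diag i = ∑ k, ∑ j, (X i j * S j k) * X i k := by
    simp [Matrix.diag, Matrix.mul_apply, Finset.sum_mul]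
  rw [this, Finset.sum_comm]
  have := sum_sym (fun j k => (X i j * S j k) * X i k)
    (fun j k => by rw [symm_apply hS j k]; ring)
  rw [this]
  simp only [Matrix.mulVec, dotProduct, Matrix.diag]
  apply Finset.sum_congr rfl
  intro j _
  rw [mul_assoc, mul_comm (S j j), ← mul_assoc, sq_eq]

lemma vec_quad (x : n → ZMod 2) (S : Matrix n n (ZMod 2)) (hS : Sᵀ = S) :
    x ⬝ᵥ (S *ᵥ x) = x ⬝ᵥ S.diag := by
  have : x ⬝ᵥ (S *ᵥ x) = ∑ j, ∑ k, x j * S j k * x k := by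
    simp [dotProduct, Matrix.mulVec, Finset.mul_sum, mul_assoc]
  rw [this, sum_sym (fun j k => x j * S j k * x k)
    (fun j k => by rw [symm_apply hS j k]; ring)]
  simp only [dotProduct, Matrix.diag]
  apply Finset.sum_congr rfl
  intro j _
  rw [mul_comm (x j) (S j j), mul_assoc, sq_eq, mul_comm]

omit [Fintype n] [DecidableEq n] in
lemma diag_add_tr (X : Matrix n n (ZMod 2)) : (X + Xᵀ).diag = 0 := by
  funext i; simp [Matrix.diag, add_self]

lemma diag_dot_diag (S T : Matrix n n (ZMod 2)) (hS : Sᵀ = S) (hT : Tᵀ = T) :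
    S.diag ⬝ᵥ T.diag = (S * T).trace := by
  have : (S * T).trace = ∑ i, ∑ j, S i j * T j i := by
    simp [Matrix.trace, Matrix.diag, Matrix.mul_apply]
  rw [this, sum_sym (fun i j => S i j * T j i)
    (fun i j => by rw [symm_apply hS i j, symm_apply hT j i])]
  simp [dotProduct, Matrix.diag]

lemma trace_sq (X : Matrix n n (ZMod 2)) : (X * X).trace = X.trace := by
  have : (X * X).trace = ∑ i, ∑ j, X i j * X j i := by
    simp [Matrix.trace, Matrix.diag, Matrix.mul_apply]
  rw [this, sum_sym (fun i j => X i j * X j i) (fun i j => by ring)]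
  simp [Matrix.trace, Matrix.diag, sq_eq]
lemma toBlocks11_transpose (x : Matrix (n ⊕ n) (n ⊕ n) (ZMod 2)) : xᵀ.toBlocks₁₁ = x.toBlocks₁₁ᵀ := rfl
lemma toBlocks12_transpose (x : Matrix (n ⊕ n) (n ⊕ n) (ZMod 2)) : xᵀ.toBlocks₁₂ = x.toBlocks₂₁ᵀ := rfl
lemma toBlocks21_transpose (x : Matrix (n ⊕ n) (n ⊕ n) (ZMod 2)) : xᵀ.toBlocks₂₁ = x.toBlocks₁₂ᵀ := rfl
lemma toBlocks22_transpose (x : Matrix (n ⊕ n) (n ⊕ n) (ZMod 2)) : xᵀ.toBlocks₂₂ = x.toBlocks₂₂ᵀ := rfl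

lemma addsolve {M : Type*} [AddCommGroup M] {X Y Z : M} (h : X + -Y = -Z) : Y = Z + X := by
  have h' : -Y = -Z - X := eq_sub_of_add_eq' h
  rw [← neg_neg Y, h', neg_sub, sub_neg_eq_add, add_comm]

lemma sp_rels_aux (x : Matrix (n ⊕ n) (n ⊕ n) (ZMod 2))
    (hx : x ∈ Matrix.symplecticGroup n (ZMod 2)) :
    x.toBlocks₁₁ * x.toBlocks₁₂ᵀ = x.toBlocks₁₂ * x.toBlocks₁₁ᵀ ∧
    x.toBlocks₂₁ * x.toBlocks₂₂ᵀ = x.toBlocks₂₂ * x.toBlocks₂₁ᵀ ∧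
    x.toBlocks₁₁ * x.toBlocks₂₂ᵀ = 1 + x.toBlocks₁₂ * x.toBlocks₂₁ᵀ := by
  have h := (SymplecticGroup.mem_iff).mp hx
  have hx' : x = fromBlocks x.toBlocks₁₁ x.toBlocks₁₂ x.toBlocks₂₁ x.toBlocks₂₂ :=
    (Matrix.fromBlocks_toBlocks x).symm
  set a := x.toBlocks₁₁; set b := x.toBlocks₁₂; set c := x.toBlocks₂₁; set d := x.toBlocks₂₂
  rw [hx'] at h
  rw [Matrix.J, Matrix.fromBlocks_transpose, Matrix.fromBlocks_multiply,
    Matrix.fromBlocks_multiply] at h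
  have h11 := congrArg Matrix.toBlocks₁₁ h
  have h12 := congrArg Matrix.toBlocks₁₂ h
  have h22 := congrArg Matrix.toBlocks₂₂ h
  simp only [Matrix.toBlocks_fromBlocks₁₁, Matrix.toBlocks_fromBlocks₁₂,
    Matrix.toBlocks_fromBlocks₂₂, Matrix.mul_zero, Matrix.mul_one, zero_add,
    add_zero, mul_neg_one, Matrix.neg_mul] at h11 h12 h22
  refine ⟨?_, ?_, ?_⟩
  · exact (add_neg_eq_zero.mp h11).symm
  · exact (add_neg_eq_zero.mp h22).symm
  · exact addsolve h12

/-- the six relations for blocks of a symplectic matrix over `ZMod 2` -/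
lemma sp_rels (x : Matrix (n ⊕ n) (n ⊕ n) (ZMod 2))
    (hx : x ∈ Matrix.symplecticGroup n (ZMod 2)) :
    x.toBlocks₁₁ * x.toBlocks₁₂ᵀ = x.toBlocks₁₂ * x.toBlocks₁₁ᵀ ∧
    x.toBlocks₂₁ * x.toBlocks₂₂ᵀ = x.toBlocks₂₂ * x.toBlocks₂₁ᵀ ∧
    x.toBlocks₁₁ * x.toBlocks₂₂ᵀ = 1 + x.toBlocks₁₂ * x.toBlocks₂₁ᵀ ∧
    x.toBlocks₁₁ᵀ * x.toBlocks₂₁ = x.toBlocks₂₁ᵀ * x.toBlocks₁₁ ∧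
    x.toBlocks₁₂ᵀ * x.toBlocks₂₂ = x.toBlocks₂₂ᵀ * x.toBlocks₁₂ ∧
    x.toBlocks₁₁ᵀ * x.toBlocks₂₂ = 1 + x.toBlocks₂₁ᵀ * x.toBlocks₁₂ := by
  obtain ⟨r1, r2, r3⟩ := sp_rels_aux x hx
  obtain ⟨s1, s2, s3⟩ := sp_rels_aux xᵀ (SymplecticGroup.transpose_mem hx)
  simp only [toBlocks11_transpose, toBlocks12_transpose, toBlocks21_transpose,
    toBlocks22_transpose, transpose_transpose] at s1 s2 s3
  exact ⟨r1, r2, r3, s1, s2, s3⟩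
lemma mul_toBlocks₁₁ (x y : Matrix (n ⊕ n) (n ⊕ n) (ZMod 2)) :
    (x * y).toBlocks₁₁ = x.toBlocks₁₁ * y.toBlocks₁₁ + x.toBlocks₁₂ * y.toBlocks₂₁ := by
  nth_rewrite 1 [← Matrix.fromBlocks_toBlocks x, ← Matrix.fromBlocks_toBlocks y]
  rw [Matrix.fromBlocks_multiply, Matrix.toBlocks_fromBlocks₁₁]

lemma mul_toBlocks₁₂ (x y : Matrix (n ⊕ n) (n ⊕ n) (ZMod 2)) :
    (x * y).toBlocks₁₂ = x.toBlocks₁₁ * y.toBlocks₁₂ + x.toBlocks₁₂ * y.toBlocks₂₂ := by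
  nth_rewrite 1 [← Matrix.fromBlocks_toBlocks x, ← Matrix.fromBlocks_toBlocks y]
  rw [Matrix.fromBlocks_multiply, Matrix.toBlocks_fromBlocks₁₂]

lemma mul_toBlocks₂₁ (x y : Matrix (n ⊕ n) (n ⊕ n) (ZMod 2)) :
    (x * y).toBlocks₂₁ = x.toBlocks₂₁ * y.toBlocks₁₁ + x.toBlocks₂₂ * y.toBlocks₂₁ := by
  nth_rewrite 1 [← Matrix.fromBlocks_toBlocks x, ← Matrix.fromBlocks_toBlocks y]
  rw [Matrix.fromBlocks_multiply, Matrix.toBlocks_fromBlocks₂₁]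

lemma mul_toBlocks₂₂ (x y : Matrix (n ⊕ n) (n ⊕ n) (ZMod 2)) :
    (x * y).toBlocks₂₂ = x.toBlocks₂₁ * y.toBlocks₁₂ + x.toBlocks₂₂ * y.toBlocks₂₂ := by
  nth_rewrite 1 [← Matrix.fromBlocks_toBlocks x, ← Matrix.fromBlocks_toBlocks y]
  rw [Matrix.fromBlocks_multiply, Matrix.toBlocks_fromBlocks₂₂]

lemma diag_key (c d p q r s : Matrix n n (ZMod 2)) (hpq : (p * qᵀ)ᵀ = p * qᵀ)
    (hrs : (r * sᵀ)ᵀ = r * sᵀ) (h3 : p * sᵀ = 1 + q * rᵀ) :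
    ((c*p + d*r) * (c*q + d*s)ᵀ).diag
      = c *ᵥ (p*qᵀ).diag + d *ᵥ (r*sᵀ).diag + (c*dᵀ).diag := by
  have h4 : (c*(q*rᵀ)*dᵀ)ᵀ = d*(r*qᵀ)*cᵀ := by
    simp only [transpose_mul, transpose_transpose]; noncomm_ring
  have e1 : (c*p + d*r) * (c*q + d*s)ᵀ
      = c*(p*qᵀ)*cᵀ + d*(r*sᵀ)*dᵀ + (c*dᵀ + (c*(q*rᵀ)*dᵀ + (c*(q*rᵀ)*dᵀ)ᵀ)) := by
    rw [h4, transpose_add, transpose_mul, transpose_mul]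
    calc (c*p + d*r)*(qᵀ*cᵀ + sᵀ*dᵀ)
        = c*(p*qᵀ)*cᵀ + d*(r*sᵀ)*dᵀ + (c*(p*sᵀ)*dᵀ + d*(r*qᵀ)*cᵀ) := by noncomm_ring
      _ = c*(p*qᵀ)*cᵀ + d*(r*sᵀ)*dᵀ + (c*dᵀ + (c*(q*rᵀ)*dᵀ + d*(r*qᵀ)*cᵀ)) := by
          rw [h3]; noncomm_ring
  rw [e1]
  rw [Matrix.diag_add, Matrix.diag_add, Matrix.diag_add, diag_add_tr (c*(q*rᵀ)*dᵀ),
    diag_conj _ _ hpq, diag_conj _ _ hrs, add_zero]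
lemma symm_of_rel {p q : Matrix n n (ZMod 2)} (h : p * qᵀ = q * pᵀ) : (p * qᵀ)ᵀ = p * qᵀ := by
  rw [transpose_mul, transpose_transpose, ← h]

/-- the "characteristic" translation vector of a mod-2 symplectic matrix -/
def phi (x : Matrix (n ⊕ n) (n ⊕ n) (ZMod 2)) : (n → ZMod 2) × (n → ZMod 2) :=
  ((x.toBlocks₂₁ * x.toBlocks₂₂ᵀ).diag, (x.toBlocks₁₁ * x.toBlocks₁₂ᵀ).diag)

/-- the affine action on characteristics mod 2 -/
def act (x : Matrix (n ⊕ n) (n ⊕ n) (ZMod 2)) (ε : (n → ZMod 2) × (n → ZMod 2)) :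
    (n → ZMod 2) × (n → ZMod 2) :=
  (x.toBlocks₂₂ *ᵥ ε.1 + x.toBlocks₂₁ *ᵥ ε.2 + (phi x).1,
   x.toBlocks₁₂ *ᵥ ε.1 + x.toBlocks₁₁ *ᵥ ε.2 + (phi x).2)

lemma toBlocks₁₁_one : (1 : Matrix (n ⊕ n) (n ⊕ n) (ZMod 2)).toBlocks₁₁ = 1 := by
  rw [← fromBlocks_one, Matrix.toBlocks_fromBlocks₁₁]
lemma toBlocks₁₂_one : (1 : Matrix (n ⊕ n) (n ⊕ n) (ZMod 2)).toBlocks₁₂ = 0 := by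
  rw [← fromBlocks_one, Matrix.toBlocks_fromBlocks₁₂]
lemma toBlocks₂₁_one : (1 : Matrix (n ⊕ n) (n ⊕ n) (ZMod 2)).toBlocks₂₁ = 0 := by
  rw [← fromBlocks_one, Matrix.toBlocks_fromBlocks₂₁]
lemma toBlocks₂₂_one : (1 : Matrix (n ⊕ n) (n ⊕ n) (ZMod 2)).toBlocks₂₂ = 1 := by
  rw [← fromBlocks_one, Matrix.toBlocks_fromBlocks₂₂]

lemma act_one (ε : (n → ZMod 2) × (n → ZMod 2)) : act 1 ε = ε := by
  unfold act phi
  rw [toBlocks₁₁_one, toBlocks₁₂_one, toBlocks₂₁_one, toBlocks₂₂_one]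
  simp

lemma act_mul (x y : Matrix (n ⊕ n) (n ⊕ n) (ZMod 2))
    (hx : x ∈ Matrix.symplecticGroup n (ZMod 2))
    (hy : y ∈ Matrix.symplecticGroup n (ZMod 2))
    (ε : (n → ZMod 2) × (n → ZMod 2)) : act (x * y) ε = act x (act y ε) := by
  obtain ⟨r1, r2, r3, _, _, _⟩ := sp_rels y hy
  have k1 := diag_key x.toBlocks₂₁ x.toBlocks₂₂ y.toBlocks₁₁ y.toBlocks₁₂ y.toBlocks₂₁
    y.toBlocks₂₂ (symm_of_rel r1) (symm_of_rel r2) r3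
  have k2 := diag_key x.toBlocks₁₁ x.toBlocks₁₂ y.toBlocks₁₁ y.toBlocks₁₂ y.toBlocks₂₁
    y.toBlocks₂₂ (symm_of_rel r1) (symm_of_rel r2) r3
  unfold act phi
  rw [mul_toBlocks₁₁, mul_toBlocks₁₂, mul_toBlocks₂₁, mul_toBlocks₂₂]
  refine Prod.ext ?_ ?_
  · show _ + _ + ((x.toBlocks₂₁ * y.toBlocks₁₁ + x.toBlocks₂₂ * y.toBlocks₂₁)
      * (x.toBlocks₂₁ * y.toBlocks₁₂ + x.toBlocks₂₂ * y.toBlocks₂₂)ᵀ).diag = _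
    rw [k1]
    simp only [Matrix.add_mulVec, Matrix.mulVec_add, Matrix.mulVec_mulVec]
    abel
  · show _ + _ + ((x.toBlocks₁₁ * y.toBlocks₁₁ + x.toBlocks₁₂ * y.toBlocks₂₁)
      * (x.toBlocks₁₁ * y.toBlocks₁₂ + x.toBlocks₁₂ * y.toBlocks₂₂)ᵀ).diag = _
    rw [k2]
    simp only [Matrix.add_mulVec, Matrix.mulVec_add, Matrix.mulVec_mulVec]
    abel
lemma act_zero (x : Matrix (n ⊕ n) (n ⊕ n) (ZMod 2)) : act x 0 = phi x := by
  unfold act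
  simp

/-- reduction mod 2 -/
def red (γ : Matrix (n ⊕ n) (n ⊕ n) ℤ) : Matrix (n ⊕ n) (n ⊕ n) (ZMod 2) :=
  γ.map (Int.castRingHom (ZMod 2))

lemma red_mul (γ δ : Matrix (n ⊕ n) (n ⊕ n) ℤ) : red (γ * δ) = red γ * red δ :=
  Matrix.map_mul

lemma red_one : red (1 : Matrix (n ⊕ n) (n ⊕ n) ℤ) = 1 := Matrix.map_one _ (map_zero _) (map_one _)

lemma red_J : red (Matrix.J n ℤ) = Matrix.J n (ZMod 2) := by
  unfold red Matrix.J
  ext i j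
  rcases i with i | i <;> rcases j with j | j <;>
    simp [Matrix.fromBlocks, Matrix.map_apply, Matrix.one_apply] <;>
    split <;> simp

lemma red_transpose (γ : Matrix (n ⊕ n) (n ⊕ n) ℤ) : red (γᵀ) = (red γ)ᵀ := rfl

lemma red_mem {γ : Matrix (n ⊕ n) (n ⊕ n) ℤ} (hγ : γ ∈ Matrix.symplecticGroup n ℤ) :
    red γ ∈ Matrix.symplecticGroup n (ZMod 2) := by
  rw [SymplecticGroup.mem_iff] at hγ ⊢
  have := congrArg (fun M : Matrix (n ⊕ n) (n ⊕ n) ℤ => M.map (Int.castRingHom (ZMod 2))) hγ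
  have h2 : red (γ * Matrix.J n ℤ * γᵀ) = red (Matrix.J n ℤ) := this
  rwa [red_mul, red_mul, red_transpose, red_J] at h2

/-- explicit symplectic inverse -/
def invS (γ : Matrix (n ⊕ n) (n ⊕ n) ℤ) : Matrix (n ⊕ n) (n ⊕ n) ℤ :=
  -Matrix.J n ℤ * γᵀ * Matrix.J n ℤ

lemma invS_mul {γ : Matrix (n ⊕ n) (n ⊕ n) ℤ} (hγ : γ ∈ Matrix.symplecticGroup n ℤ) :
    invS γ * γ = 1 := by
  have h := SymplecticGroup.inv_left_mul_aux hγ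
  unfold invS
  calc -Matrix.J n ℤ * γᵀ * Matrix.J n ℤ * γ = -(Matrix.J n ℤ * γᵀ * Matrix.J n ℤ * γ) := by
        simp only [Matrix.neg_mul]
    _ = 1 := h

lemma mul_invS {γ : Matrix (n ⊕ n) (n ⊕ n) ℤ} (hγ : γ ∈ Matrix.symplecticGroup n ℤ) :
    γ * invS γ = 1 := by
  have h := SymplecticGroup.mem_iff.mp hγ
  unfold invS
  calc γ * (-Matrix.J n ℤ * γᵀ * Matrix.J n ℤ) = -(γ * Matrix.J n ℤ * γᵀ * Matrix.J n ℤ) := by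
        simp only [Matrix.neg_mul, Matrix.mul_neg, Matrix.mul_assoc]
    _ = -(Matrix.J n ℤ * Matrix.J n ℤ) := by rw [h]
    _ = 1 := by rw [Matrix.J_squared]; exact neg_neg 1

lemma invS_mem {γ : Matrix (n ⊕ n) (n ⊕ n) ℤ} (hγ : γ ∈ Matrix.symplecticGroup n ℤ) :
    invS γ ∈ Matrix.symplecticGroup n ℤ :=
  mul_mem (mul_mem (SymplecticGroup.neg_mem (SymplecticGroup.J_mem n ℤ))
    (SymplecticGroup.transpose_mem hγ)) (SymplecticGroup.J_mem n ℤ)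

lemma invS_anti {γ δ : Matrix (n ⊕ n) (n ⊕ n) ℤ} : invS (γ * δ) = invS δ * invS γ := by
  unfold invS
  rw [Matrix.transpose_mul]
  have : -Matrix.J n ℤ * δᵀ * Matrix.J n ℤ * (-Matrix.J n ℤ * γᵀ * Matrix.J n ℤ)
      = -Matrix.J n ℤ * δᵀ * (-(Matrix.J n ℤ * Matrix.J n ℤ)) * γᵀ * Matrix.J n ℤ := by
    simp only [Matrix.neg_mul, Matrix.mul_neg, Matrix.mul_assoc, neg_neg]
  rw [this, Matrix.J_squared, neg_neg, Matrix.mul_one]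
  simp only [Matrix.neg_mul, Matrix.mul_assoc]

lemma invS_blocks (γ : Matrix (n ⊕ n) (n ⊕ n) ℤ) :
    invS γ = fromBlocks γ.toBlocks₂₂ᵀ (-γ.toBlocks₁₂ᵀ) (-γ.toBlocks₂₁ᵀ) γ.toBlocks₁₁ᵀ := by
  unfold invS
  nth_rewrite 1 [← Matrix.fromBlocks_toBlocks γ]
  rw [Matrix.J, Matrix.fromBlocks_transpose, Matrix.fromBlocks_neg,
    Matrix.fromBlocks_multiply, Matrix.fromBlocks_multiply]
  simp only [Matrix.mul_zero, Matrix.mul_one, Matrix.mul_neg, Matrix.zero_mul,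
    Matrix.one_mul, zero_add, add_zero, neg_zero, Matrix.neg_mul, neg_neg]

/-- the theta characteristic attached to a symplectic matrix -/
def psi (γ : Matrix (n ⊕ n) (n ⊕ n) ℤ) : (n → ZMod 2) × (n → ZMod 2) :=
  act (red (invS γ)) 0

/-- abstract theta group -/
def Theta : Set (Matrix (n ⊕ n) (n ⊕ n) ℤ) :=
  {γ | γ ∈ Matrix.symplecticGroup n ℤ ∧ phi (red γ) = 0}

lemma theta_mul {p q : Matrix (n ⊕ n) (n ⊕ n) ℤ} (hp : p ∈ Theta) (hq : q ∈ Theta) :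
    p * q ∈ Theta := by
  refine ⟨mul_mem hp.1 hq.1, ?_⟩
  rw [← act_zero, red_mul, act_mul _ _ (red_mem hp.1) (red_mem hq.1), act_zero, hq.2, act_zero,
    hp.2]

lemma theta_one : (1 : Matrix (n ⊕ n) (n ⊕ n) ℤ) ∈ Theta := by
  refine ⟨one_mem _, ?_⟩
  rw [← act_zero, red_one, act_one]

lemma theta_invS {p : Matrix (n ⊕ n) (n ⊕ n) ℤ} (hp : p ∈ Theta) : invS p ∈ Theta := by
  refine ⟨invS_mem hp.1, ?_⟩
  have h0 : act (red p) 0 = 0 := by rw [act_zero, hp.2]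
  have : phi (red (invS p)) = act (red (invS p)) (act (red p) 0) := by rw [h0, act_zero]
  rw [this, ← act_mul _ _ (red_mem (invS_mem hp.1)) (red_mem hp.1), ← red_mul, invS_mul hp.1,
    red_one, act_one]

lemma psi_theta_mul {p γ : Matrix (n ⊕ n) (n ⊕ n) ℤ} (hp : p ∈ Theta)
    (hγ : γ ∈ Matrix.symplecticGroup n ℤ) : psi (p * γ) = psi γ := by
  unfold psi
  rw [invS_anti, red_mul, act_mul _ _ (red_mem (invS_mem hγ)) (red_mem (invS_mem hp.1)),
    act_zero, (theta_invS hp).2, act_zero]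

lemma coset_of_psi_eq {γ γ' : Matrix (n ⊕ n) (n ⊕ n) ℤ} (hγ : γ ∈ Matrix.symplecticGroup n ℤ)
    (hγ' : γ' ∈ Matrix.symplecticGroup n ℤ) (h : psi γ = psi γ') :
    γ' * invS γ ∈ Theta ∧ γ' = (γ' * invS γ) * γ := by
  constructor
  · refine ⟨mul_mem hγ' (invS_mem hγ), ?_⟩
    have : phi (red (γ' * invS γ)) = act (red γ') (psi γ) := by
      rw [← act_zero, red_mul, act_mul _ _ (red_mem hγ') (red_mem (invS_mem hγ))]
      rfl
    rw [this, h]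
    show act (red γ') (act (red (invS γ')) 0) = 0
    rw [← act_mul _ _ (red_mem hγ') (red_mem (invS_mem hγ')), ← red_mul, mul_invS hγ',
      red_one, act_one]
  · rw [Matrix.mul_assoc, invS_mul hγ, Matrix.mul_one]
def red2 (M : Matrix n n ℤ) : Matrix n n (ZMod 2) := M.map (Int.castRingHom (ZMod 2))

lemma red2_mul (M N : Matrix n n ℤ) : red2 (M * N) = red2 M * red2 N := Matrix.map_mul
lemma red2_one : red2 (1 : Matrix n n ℤ) = 1 := Matrix.map_one _ (map_zero _) (map_one _)
lemma red2_zero : red2 (0 : Matrix n n ℤ) = 0 := Matrix.map_zero _ (map_zero _)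
lemma red2_add (M N : Matrix n n ℤ) : red2 (M + N) = red2 M + red2 N := Matrix.map_add _ (map_add _) _ _
lemma red2_transpose (M : Matrix n n ℤ) : red2 (Mᵀ) = (red2 M)ᵀ := rfl
lemma red2_neg (M : Matrix n n ℤ) : red2 (-M) = -(red2 M) := by
  ext i j; simp [red2, Matrix.map_apply]

lemma red_fromBlocks (a b c d : Matrix n n ℤ) :
    red (fromBlocks a b c d) = fromBlocks (red2 a) (red2 b) (red2 c) (red2 d) :=
  Matrix.fromBlocks_map a b c d _

lemma neg_vec_eq (v : n → ZMod 2) : -v = v := by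
  funext i; exact CharTwo.neg_eq _

/-- `psi` of an explicit block matrix -/
lemma psi_fromBlocks (a b c d : Matrix n n ℤ) :
    psi (fromBlocks a b c d)
      = (((red2 c)ᵀ * red2 a).diag, ((red2 d)ᵀ * red2 b).diag) := by
  unfold psi
  rw [act_zero, invS_blocks]
  rw [Matrix.toBlocks_fromBlocks₁₁, Matrix.toBlocks_fromBlocks₁₂, Matrix.toBlocks_fromBlocks₂₁,
    Matrix.toBlocks_fromBlocks₂₂, red_fromBlocks]
  unfold phi
  rw [Matrix.toBlocks_fromBlocks₁₁, Matrix.toBlocks_fromBlocks₁₂, Matrix.toBlocks_fromBlocks₂₁,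
    Matrix.toBlocks_fromBlocks₂₂]
  refine Prod.ext ?_ ?_
  · show (red2 (-cᵀ) * (red2 aᵀ)ᵀ).diag = _
    rw [red2_neg, red2_transpose, red2_transpose, transpose_transpose, Matrix.neg_mul,
      Matrix.diag_neg, neg_vec_eq]
  · show (red2 dᵀ * (red2 (-bᵀ))ᵀ).diag = _
    rw [red2_neg, red2_transpose, red2_transpose, transpose_neg, transpose_transpose,
      Matrix.mul_neg, Matrix.diag_neg, neg_vec_eq]
lemma diag_transpose_self (X : Matrix n n (ZMod 2)) :
    (Xᵀ * X).diag = Xᵀ *ᵥ (fun _ => 1) := by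
  funext i
  simp only [Matrix.diag, Matrix.mul_apply, Matrix.mulVec, dotProduct, Matrix.transpose_apply,
    mul_one]
  exact Finset.sum_congr rfl (fun j _ => sq_eq _)

lemma mem_sp_of (a b c d : Matrix n n ℤ) (h1 : a * bᵀ = b * aᵀ) (h2 : c * dᵀ = d * cᵀ)
    (h3 : a * dᵀ - b * cᵀ = 1) : fromBlocks a b c d ∈ Matrix.symplecticGroup n ℤ := by
  rw [SymplecticGroup.mem_iff, Matrix.J, Matrix.fromBlocks_transpose, Matrix.fromBlocks_multiply,
    Matrix.fromBlocks_multiply]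
  have h3' : d * aᵀ - c * bᵀ = 1 := by
    have := congrArg Matrix.transpose h3
    rwa [transpose_sub, transpose_mul, transpose_mul, transpose_transpose, transpose_transpose,
      transpose_one] at this
  have e11 : (a * 0 + b * 1) * aᵀ + (a * -1 + b * 0) * bᵀ = 0 := by
    simp only [Matrix.mul_zero, Matrix.mul_one, zero_add, add_zero, mul_neg_one, Matrix.neg_mul]
    rw [h1]; abel
  have e12 : (a * 0 + b * 1) * cᵀ + (a * -1 + b * 0) * dᵀ = -1 := by
    simp only [Matrix.mul_zero, Matrix.mul_one, zero_add, add_zero, mul_neg_one, Matrix.neg_mul]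
    rw [← h3]; abel
  have e21 : (c * 0 + d * 1) * aᵀ + (c * -1 + d * 0) * bᵀ = 1 := by
    simp only [Matrix.mul_zero, Matrix.mul_one, zero_add, add_zero, mul_neg_one, Matrix.neg_mul]
    rw [← sub_eq_add_neg, h3']
  have e22 : (c * 0 + d * 1) * cᵀ + (c * -1 + d * 0) * dᵀ = 0 := by
    simp only [Matrix.mul_zero, Matrix.mul_one, zero_add, add_zero, mul_neg_one, Matrix.neg_mul]
    rw [h2]; abel
  rw [e11, e12, e21, e22]

/-- the lower unipotent block matrix [[1,0],[1,1]] -/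
def Mlow : Matrix (n ⊕ n) (n ⊕ n) ℤ := fromBlocks 1 0 1 1

lemma Mlow_mem : (Mlow : Matrix (n ⊕ n) (n ⊕ n) ℤ) ∈ Matrix.symplecticGroup n ℤ := by
  apply mem_sp_of <;> simp

lemma Mlow_mul_fromBlocks (a b d : Matrix n n ℤ) :
    (Mlow : Matrix (n ⊕ n) (n ⊕ n) ℤ) * fromBlocks a b 0 d = fromBlocks a b a (b + d) := by
  unfold Mlow
  rw [Matrix.fromBlocks_multiply]
  simp

lemma psi_siegel_fst (d : Matrix (n ⊕ n) (n ⊕ n) ℤ) (h21 : d.toBlocks₂₁ = 0) :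
    (psi d).1 = 0 := by
  have hd : d = fromBlocks d.toBlocks₁₁ d.toBlocks₁₂ 0 d.toBlocks₂₂ := by
    rw [← h21, Matrix.fromBlocks_toBlocks]
  rw [hd, psi_fromBlocks]
  simp [red2_zero]

lemma psi_Mlow_mul (d : Matrix (n ⊕ n) (n ⊕ n) ℤ) (h21 : d.toBlocks₂₁ = 0) :
    psi (Mlow * d)
      = ((red2 d.toBlocks₁₁)ᵀ *ᵥ (fun _ => 1),
         ((red2 (d.toBlocks₁₂ + d.toBlocks₂₂))ᵀ * red2 d.toBlocks₁₂).diag) := by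
  have hd : d = fromBlocks d.toBlocks₁₁ d.toBlocks₁₂ 0 d.toBlocks₂₂ := by
    rw [← h21, Matrix.fromBlocks_toBlocks]
  conv_lhs => rw [hd, Mlow_mul_fromBlocks, psi_fromBlocks]
  rw [← diag_transpose_self]

lemma phi_dot {x : Matrix (n ⊕ n) (n ⊕ n) (ZMod 2)}
    (hx : x ∈ Matrix.symplecticGroup n (ZMod 2)) : (phi x).1 ⬝ᵥ (phi x).2 = 0 := by
  obtain ⟨r1, r2, -, -, -, r6⟩ := sp_rels x hx
  set a := x.toBlocks₁₁; set b := x.toBlocks₁₂; set c := x.toBlocks₂₁; set d := x.toBlocks₂₂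
  have h6 : dᵀ * a = 1 + bᵀ * c := by
    have := congrArg Matrix.transpose r6
    rwa [transpose_mul, transpose_add, transpose_one, transpose_mul, transpose_transpose,
      transpose_transpose] at this
  show (c * dᵀ).diag ⬝ᵥ (a * bᵀ).diag = 0
  rw [diag_dot_diag _ _ (symm_of_rel r2) (symm_of_rel r1)]
  have : c * dᵀ * (a * bᵀ) = c * bᵀ + c * bᵀ * (c * bᵀ) := by
    calc c * dᵀ * (a * bᵀ) = c * (dᵀ * a) * bᵀ := by noncomm_ring
      _ = c * (1 + bᵀ * c) * bᵀ := by rw [h6]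
      _ = c * bᵀ + c * bᵀ * (c * bᵀ) := by noncomm_ring
  rw [this, Matrix.trace_add, trace_sq]
  exact add_self _

lemma psi_even {γ : Matrix (n ⊕ n) (n ⊕ n) ℤ} (hγ : γ ∈ Matrix.symplecticGroup n ℤ) :
    (psi γ).1 ⬝ᵥ (psi γ).2 = 0 := by
  unfold psi
  rw [act_zero]
  exact phi_dot (red_mem (invS_mem hγ))

lemma red_toBlocks₁₁ (d : Matrix (n ⊕ n) (n ⊕ n) ℤ) : (red d).toBlocks₁₁ = red2 d.toBlocks₁₁ := rfl
lemma red_toBlocks₁₂ (d : Matrix (n ⊕ n) (n ⊕ n) ℤ) : (red d).toBlocks₁₂ = red2 d.toBlocks₁₂ := rfl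
lemma red_toBlocks₂₁ (d : Matrix (n ⊕ n) (n ⊕ n) ℤ) : (red d).toBlocks₂₁ = red2 d.toBlocks₂₁ := rfl
lemma red_toBlocks₂₂ (d : Matrix (n ⊕ n) (n ⊕ n) ℤ) : (red d).toBlocks₂₂ = red2 d.toBlocks₂₂ := rfl
lemma red2_zero' : red2 (0 : Matrix n n ℤ) = 0 := Matrix.map_zero _ (map_zero _)

/-- for a Siegel parabolic element, the reduced diagonal blocks are inverse transposes -/
lemma siegel_block_inv {d : Matrix (n ⊕ n) (n ⊕ n) ℤ} (hd : d ∈ Matrix.symplecticGroup n ℤ)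
    (h21 : d.toBlocks₂₁ = 0) :
    red2 d.toBlocks₁₁ * (red2 d.toBlocks₂₂)ᵀ = 1 := by
  obtain ⟨-, -, r3, -⟩ := sp_rels (red d) (red_mem hd)
  rw [red_toBlocks₁₁, red_toBlocks₁₂, red_toBlocks₂₁, red_toBlocks₂₂, h21, red2_zero'] at r3
  simpa using r3

lemma psi_Mlow_fst_ne [Nonempty n] {d : Matrix (n ⊕ n) (n ⊕ n) ℤ}
    (hd : d ∈ Matrix.symplecticGroup n ℤ) (h21 : d.toBlocks₂₁ = 0) :
    (red2 d.toBlocks₁₁)ᵀ *ᵥ (fun _ => (1 : ZMod 2)) ≠ 0 := by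
  intro h0
  have hinv := siegel_block_inv hd h21
  have h2 : red2 d.toBlocks₂₂ * (red2 d.toBlocks₁₁)ᵀ = 1 := by
    have := congrArg Matrix.transpose hinv
    rwa [transpose_mul, transpose_transpose, transpose_one] at this
  have : (fun _ => (1 : ZMod 2)) = (0 : n → ZMod 2) := by
    calc (fun _ => (1 : ZMod 2)) = (1 : Matrix n n (ZMod 2)) *ᵥ (fun _ => 1) := by
          rw [Matrix.one_mulVec]
      _ = (red2 d.toBlocks₂₂ * (red2 d.toBlocks₁₁)ᵀ) *ᵥ (fun _ => 1) := by rw [h2]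
      _ = red2 d.toBlocks₂₂ *ᵥ ((red2 d.toBlocks₁₁)ᵀ *ᵥ (fun _ => 1)) := by
          rw [Matrix.mulVec_mulVec]
      _ = 0 := by rw [h0, Matrix.mulVec_zero]
  have := congrFun this (Classical.arbitrary n)
  simp at this
lemma vecMulVec_mulVec (x y v : n → ZMod 2) :
    vecMulVec x y *ᵥ v = (y ⬝ᵥ v) • x := by
  funext i
  simp only [Matrix.mulVec, dotProduct, vecMulVec_apply, Pi.smul_apply, smul_eq_mul]
  rw [Finset.sum_mul]
  apply Finset.sum_congr rfl
  intro k _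
  ring

lemma red2_vecMulVec (x y : n → ℤ) :
    red2 (vecMulVec x y) = vecMulVec (fun i => ((x i : ℤ) : ZMod 2)) (fun j => ((y j : ℤ) : ZMod 2)) := by
  ext i j
  simp [red2, Matrix.map_apply, vecMulVec_apply]

def dB (β : n → ZMod 2) : Matrix (n ⊕ n) (n ⊕ n) ℤ :=
  fromBlocks 1 (Matrix.diagonal (fun i => ((β i).val : ℤ))) 0 1

lemma dB_mem (β : n → ZMod 2) : dB β ∈ Matrix.symplecticGroup n ℤ := by
  apply mem_sp_of <;> simp [Matrix.diagonal_transpose]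

lemma dB_21 (β : n → ZMod 2) : (dB β).toBlocks₂₁ = 0 := Matrix.toBlocks_fromBlocks₂₁ _ _ _ _

lemma psi_dB (β : n → ZMod 2) : psi (dB β) = (0, β) := by
  unfold dB
  rw [psi_fromBlocks, red2_zero, red2_one]
  refine Prod.ext (by simp) ?_
  show ((1 : Matrix n n (ZMod 2))ᵀ * red2 (Matrix.diagonal _)).diag = β
  rw [Matrix.transpose_one, Matrix.one_mul]
  funext i
  show ((Matrix.diagonal (fun i => ((β i).val : ℤ)) i i : ℤ) : ZMod 2) = β i
  rw [Matrix.diagonal_apply_eq]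
  exact val_intCast _
lemma vecMulVec_transpose (x y : n → ZMod 2) : (vecMulVec x y)ᵀ = vecMulVec y x := by
  ext i j
  simp only [Matrix.transpose_apply, vecMulVec_apply]
  ring

lemma vecMulVec_transposeZ (x y : n → ℤ) : (vecMulVec x y)ᵀ = vecMulVec y x := by
  ext i j
  simp only [Matrix.transpose_apply, vecMulVec_apply]
  ring

lemma exists_siegel_psi (α β : n → ZMod 2) (hα : α ≠ 0) (hab : α ⬝ᵥ β = 0) :
    ∃ d : Matrix (n ⊕ n) (n ⊕ n) ℤ, d ∈ Matrix.symplecticGroup n ℤ ∧ d.toBlocks₂₁ = 0 ∧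
      psi (Mlow * d) = (α, β) := by
  obtain ⟨i₀, hi₀⟩ : ∃ i, α i ≠ 0 := by
    by_contra h; push_neg at h; exact hα (funext fun i => h i)
  have hα1 : α i₀ = 1 := ne_zero_eq_one hi₀
  set e₀ : n → ℤ := fun j => if j = i₀ then 1 else 0 with he₀
  set w : n → ℤ := fun j => if j = i₀ then 0 else ((α j).val : ℤ) - 1 with hw
  set W := vecMulVec w e₀ with hWdef
  have hWW : W * W = 0 := by
    ext i j
    rw [Matrix.mul_apply]
    refine Finset.sum_eq_zero (fun k _ => ?_)
    rw [hWdef, vecMulVec_apply, vecMulVec_apply]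
    rcases eq_or_ne k i₀ with h | h
    · subst h
      rw [hw]
      simp
    · rw [he₀]
      simp [h]
  set R : Matrix n n ℤ := 1 + W with hRdef
  set R' : Matrix n n ℤ := 1 - W with hR'def
  have hRR' : R * R' = 1 := by
    have expand : (1 + W) * (1 - W) = 1 - W * W := by noncomm_ring
    rw [hRdef, hR'def, expand, hWW, sub_zero]
  have hR'R : R' * R = 1 := by
    have expand : (1 - W) * (1 + W) = 1 - W * W := by noncomm_ring
    rw [hRdef, hR'def, expand, hWW, sub_zero]
  set βi : n → ℤ := fun j => ((β j).val : ℤ) with hβi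
  set S := vecMulVec βi e₀ + vecMulVec e₀ βi with hSdef
  have hS : Sᵀ = S := by
    rw [hSdef, transpose_add, vecMulVec_transposeZ, vecMulVec_transposeZ, add_comm]
  set A := Rᵀ with hAdef
  set B := A * S with hBdef
  set D := R' with hDdef
  have h21 : (fromBlocks A B 0 D).toBlocks₂₁ = 0 := Matrix.toBlocks_fromBlocks₂₁ _ _ _ _
  -- the first component calculation
  have comp1 : (red2 A)ᵀ *ᵥ (fun _ => (1 : ZMod 2)) = α := by
    have hAR : (red2 A)ᵀ = red2 R := by
      rw [hAdef, red2_transpose, transpose_transpose]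
    rw [hAR]
    funext j
    have hsum : (∑ k, R j k) = 1 + w j := by
      rw [hRdef]
      simp only [Matrix.add_apply]
      rw [Finset.sum_add_distrib]
      congr 1
      · simp [Matrix.one_apply]
      · rw [hWdef]
        simp only [vecMulVec_apply, he₀]
        simp
    have : (red2 R *ᵥ (fun _ => (1 : ZMod 2))) j = ((∑ k, R j k : ℤ) : ZMod 2) := by
      rw [Int.cast_sum]
      simp only [Matrix.mulVec, dotProduct, mul_one]
      rfl
    rw [this, hsum]
    rcases eq_or_ne j i₀ with h | h
    · subst h
      rw [hw]
      simp [hα1]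
    · rw [hw]
      simp only [h, if_neg, if_false]
      have : (1 : ℤ) + (((α j).val : ℤ) - 1) = ((α j).val : ℤ) := by ring
      rw [this, val_intCast]
  refine ⟨fromBlocks A B 0 D, ?_, h21, ?_⟩
  · apply mem_sp_of
    · rw [hBdef, transpose_mul, hS, ← Matrix.mul_assoc, Matrix.mul_assoc]
    · simp
    · rw [transpose_zero, Matrix.mul_zero, sub_zero, hAdef, hDdef, ← Matrix.transpose_mul,
        hR'R, transpose_one]
  · rw [psi_Mlow_mul _ h21]
    rw [Matrix.toBlocks_fromBlocks₁₁, Matrix.toBlocks_fromBlocks₁₂, Matrix.toBlocks_fromBlocks₂₂]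
    refine Prod.ext comp1 ?_
    show ((red2 (B + D))ᵀ * red2 B).diag = β
    have hR'A : R'ᵀ * A = 1 := by
      rw [hAdef, ← Matrix.transpose_mul, hRR', transpose_one]
    have key : (B + D)ᵀ * B = S * (Aᵀ * A) * S + S := by
      calc (B + D)ᵀ * B = Sᵀ * (Aᵀ * A) * S + (R'ᵀ * A) * S := by
            rw [hBdef, hDdef, transpose_add, transpose_mul]
            noncomm_ring
        _ = S * (Aᵀ * A) * S + S := by rw [hR'A, hS, Matrix.one_mul]
    rw [← red2_transpose, ← red2_mul, key, red2_add, red2_mul, red2_mul, red2_mul]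
    rw [Matrix.diag_add]
    have hSred : (red2 S)ᵀ = red2 S := by rw [← red2_transpose, hS]
    have hsym : (red2 (Aᵀ) * red2 A)ᵀ = red2 (Aᵀ) * red2 A := by
      rw [red2_transpose, transpose_mul, transpose_transpose, ← red2_transpose]
    have e1 : (red2 S * (red2 (Aᵀ) * red2 A) * red2 S).diag
        = red2 S *ᵥ ((red2 (Aᵀ) * red2 A).diag) := by
      nth_rewrite 2 [← hSred]
      exact diag_conj _ _ hsym
    rw [e1]
    have e2 : (red2 (Aᵀ) * red2 A).diag = α := by
      rw [red2_transpose, diag_transpose_self, comp1]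
    rw [e2]
    -- now compute red2 S *ᵥ α + diag (red2 S)
    have hSr : red2 S = vecMulVec β (fun j => if j = i₀ then (1 : ZMod 2) else 0)
        + vecMulVec (fun j => if j = i₀ then (1 : ZMod 2) else 0) β := by
      have hecast : (fun j => ((e₀ j : ℤ) : ZMod 2)) = (fun j => if j = i₀ then (1:ZMod 2) else 0) := by
        funext j; rw [he₀]; dsimp only; split <;> simp
      have hbcast : (fun j => ((βi j : ℤ) : ZMod 2)) = β := by
        funext j; rw [hβi]; exact val_intCast _
      rw [hSdef, red2_add, red2_vecMulVec, red2_vecMulVec, hecast, hbcast]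
    rw [hSr]
    rw [Matrix.add_mulVec, vecMulVec_mulVec, vecMulVec_mulVec]
    have d1 : (fun j => if j = i₀ then (1 : ZMod 2) else 0) ⬝ᵥ α = 1 := by
      simp only [dotProduct, ite_mul, one_mul, zero_mul]
      rw [Finset.sum_ite_eq' Finset.univ i₀ α]
      simp [hα1]
    have d2 : β ⬝ᵥ α = 0 := by rwa [dotProduct_comm]
    rw [d1, d2, one_smul, zero_smul, add_zero]
    have d3 : (vecMulVec β (fun j => if j = i₀ then (1 : ZMod 2) else 0)
        + vecMulVec (fun j => if j = i₀ then (1 : ZMod 2) else 0) β).diag = 0 := by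
      funext i
      simp only [Matrix.diag_apply, Matrix.add_apply, vecMulVec_apply]
      rw [mul_comm]
      exact add_self _
    rw [d3, add_zero]

def Siegel : Set (Matrix (n ⊕ n) (n ⊕ n) ℤ) :=
  {γ | γ ∈ Matrix.symplecticGroup n ℤ ∧ γ.toBlocks₂₁ = 0}

/-- the left coset of `Theta` through `d` -/
def coset (d : Matrix (n ⊕ n) (n ⊕ n) ℤ) : Set (Matrix (n ⊕ n) (n ⊕ n) ℤ) :=
  {x | ∃ p ∈ Theta, x = p * d}

lemma mem_coset_self (d : Matrix (n ⊕ n) (n ⊕ n) ℤ) : d ∈ coset d :=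
  ⟨1, theta_one, (one_mul d).symm⟩

lemma coset_eq_of_psi_eq {d d' : Matrix (n ⊕ n) (n ⊕ n) ℤ}
    (hd : d ∈ Matrix.symplecticGroup n ℤ) (hd' : d' ∈ Matrix.symplecticGroup n ℤ)
    (h : psi d = psi d') : coset d = coset d' := by
  obtain ⟨hq1, hq2⟩ := coset_of_psi_eq hd' hd h.symm
  obtain ⟨hr1, hr2⟩ := coset_of_psi_eq hd hd' h
  ext x
  constructor
  · rintro ⟨p, hp, rfl⟩
    exact ⟨p * (d * invS d'), theta_mul hp hq1, by rw [Matrix.mul_assoc, ← hq2]⟩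
  · rintro ⟨p, hp, rfl⟩
    exact ⟨p * (d' * invS d), theta_mul hp hr1, by rw [Matrix.mul_assoc, ← hr2]⟩

lemma psi_eq_of_coset_eq {d d' : Matrix (n ⊕ n) (n ⊕ n) ℤ}
    (hd : d ∈ Matrix.symplecticGroup n ℤ) (hd' : d' ∈ Matrix.symplecticGroup n ℤ)
    (h : coset d = coset d') : psi d = psi d' := by
  have : d ∈ coset d' := h ▸ mem_coset_self d
  obtain ⟨p, hp, hpd⟩ := this
  rw [hpd, psi_theta_mul hp hd']

/-- the first double coset, as a set of left cosets -/
lemma T1_eq :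
    {C : Set (Matrix (n ⊕ n) (n ⊕ n) ℤ) | ∃ d ∈ Siegel, C = coset d}
      = Set.range (fun β : n → ZMod 2 => coset (dB β)) := by
  ext C
  constructor
  · rintro ⟨d, ⟨hd, h21⟩, rfl⟩
    refine ⟨(psi d).2, ?_⟩
    have h1 : psi d = (0, (psi d).2) := Prod.ext (psi_siegel_fst d h21) rfl
    exact coset_eq_of_psi_eq (dB_mem _) hd (by rw [psi_dB, ← h1])
  · rintro ⟨β, rfl⟩
    exact ⟨dB β, ⟨dB_mem β, dB_21 β⟩, rfl⟩

lemma k1_inj : Function.Injective (fun β : n → ZMod 2 => coset (dB β)) := by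
  intro β β' h
  have := psi_eq_of_coset_eq (dB_mem β) (dB_mem β') h
  rw [psi_dB, psi_dB] at this
  exact (Prod.ext_iff.mp this).2

/-- parameter space for the second double coset -/
abbrev Epar (n : Type*) [Fintype n] [DecidableEq n] : Type _ :=
  {q : (n → ZMod 2) × (n → ZMod 2) // q.1 ≠ 0 ∧ q.1 ⬝ᵥ q.2 = 0}

noncomputable def dd (ε : Epar n) : Matrix (n ⊕ n) (n ⊕ n) ℤ :=
  Classical.choose (exists_siegel_psi ε.1.1 ε.1.2 ε.2.1 ε.2.2)

lemma dd_spec (ε : Epar n) : dd ε ∈ Matrix.symplecticGroup n ℤ ∧ (dd ε).toBlocks₂₁ = 0 ∧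
    psi (Mlow * dd ε) = (ε.1.1, ε.1.2) :=
  Classical.choose_spec (exists_siegel_psi ε.1.1 ε.1.2 ε.2.1 ε.2.2)

lemma T2_eq [Nonempty n] :
    {C : Set (Matrix (n ⊕ n) (n ⊕ n) ℤ) | ∃ d ∈ Siegel, C = coset (Mlow * d)}
      = Set.range (fun ε : Epar n => coset (Mlow * dd ε)) := by
  ext C
  constructor
  · rintro ⟨d, ⟨hd, h21⟩, rfl⟩
    have hMd : Mlow * d ∈ Matrix.symplecticGroup n ℤ := mul_mem Mlow_mem hd
    have hfst : (psi (Mlow * d)).1 ≠ 0 := by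
      rw [psi_Mlow_mul d h21]
      exact psi_Mlow_fst_ne hd h21
    refine ⟨⟨psi (Mlow * d), hfst, psi_even hMd⟩, ?_⟩
    have hspec := dd_spec ⟨psi (Mlow * d), hfst, psi_even hMd⟩
    refine coset_eq_of_psi_eq (mul_mem Mlow_mem hspec.1) hMd ?_
    rw [hspec.2.2]
  · rintro ⟨ε, rfl⟩
    exact ⟨dd ε, ⟨(dd_spec ε).1, (dd_spec ε).2.1⟩, rfl⟩

lemma k2_inj [Nonempty n] : Function.Injective (fun ε : Epar n => coset (Mlow * dd ε)) := by
  intro ε ε' h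
  have h1 := psi_eq_of_coset_eq (mul_mem Mlow_mem (dd_spec ε).1)
    (mul_mem Mlow_mem (dd_spec ε').1) h
  rw [(dd_spec ε).2.2, (dd_spec ε').2.2] at h1
  apply Subtype.ext
  exact Prod.ext (Prod.ext_iff.mp h1).1 (Prod.ext_iff.mp h1).2
lemma dot_single (a : n → ZMod 2) (i₀ : n) :
    a ⬝ᵥ (fun j => if j = i₀ then 1 else 0) = a i₀ := by
  simp only [dotProduct, mul_ite, mul_one, mul_zero]
  rw [Finset.sum_ite_eq' Finset.univ i₀ a]
  simp

lemma card_hyperplane [Nonempty n] (a : n → ZMod 2) (ha : a ≠ 0) :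
    Nat.card {b : n → ZMod 2 // a ⬝ᵥ b = 0} = 2 ^ (Fintype.card n - 1) := by
  classical
  obtain ⟨i₀, hi₀⟩ : ∃ i, a i ≠ 0 := by
    by_contra h; push_neg at h; exact ha (funext fun i => h i)
  have hai : a i₀ = 1 := ne_zero_eq_one hi₀
  set e : n → ZMod 2 := fun j => if j = i₀ then 1 else 0 with he
  have hee : ∀ b : n → ZMod 2, b + e + e = b := by
    intro b; funext j; simp [add_assoc, add_self]
  have hdot : ∀ b : n → ZMod 2, a ⬝ᵥ (b + e) = a ⬝ᵥ b + 1 := by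
    intro b
    rw [dotProduct_add, dot_single, hai]
  have equiv1 : {b : n → ZMod 2 // a ⬝ᵥ b = 0} ≃ {b : n → ZMod 2 // ¬ (a ⬝ᵥ b = 0)} :=
    { toFun := fun b => ⟨b.1 + e, by rw [hdot, b.2]; decide⟩
      invFun := fun b => ⟨b.1 + e, by rw [hdot, ne_zero_eq_one b.2]; decide⟩
      left_inv := fun b => Subtype.ext (hee b.1)
      right_inv := fun b => Subtype.ext (hee b.1) }
  have hcard : Fintype.card {b : n → ZMod 2 // a ⬝ᵥ b = 0}
      = Fintype.card {b : n → ZMod 2 // ¬ (a ⬝ᵥ b = 0)} := Fintype.card_congr equiv1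
  have hcompl : Fintype.card {b : n → ZMod 2 // ¬ (a ⬝ᵥ b = 0)}
      = Fintype.card (n → ZMod 2) - Fintype.card {b : n → ZMod 2 // a ⬝ᵥ b = 0} :=
    Fintype.card_subtype_compl _
  have hle : Fintype.card {b : n → ZMod 2 // a ⬝ᵥ b = 0} ≤ Fintype.card (n → ZMod 2) :=
    Fintype.card_subtype_le _
  have hV : Fintype.card (n → ZMod 2) = 2 ^ Fintype.card n := by
    rw [Fintype.card_fun]
    rfl
  have hpow : 2 ^ Fintype.card n = 2 * 2 ^ (Fintype.card n - 1) := by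
    have h1 : 1 ≤ Fintype.card n := Fintype.card_pos
    calc 2 ^ Fintype.card n = 2 ^ (1 + (Fintype.card n - 1)) := by congr 1; omega
      _ = 2 * 2 ^ (Fintype.card n - 1) := by rw [pow_add, pow_one]
  rw [Nat.card_eq_fintype_card]
  omega

lemma card_Epar [Nonempty n] :
    Nat.card (Epar n) = 2 ^ (Fintype.card n - 1) * (2 ^ Fintype.card n - 1) := by
  classical
  have equiv1 : Epar n ≃ Σ a : (n → ZMod 2), {b : n → ZMod 2 // a ≠ 0 ∧ a ⬝ᵥ b = 0} :=
    Equiv.subtypeProdEquivSigmaSubtype (fun (a b : n → ZMod 2) => a ≠ 0 ∧ a ⬝ᵥ b = 0)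
  rw [Nat.card_congr equiv1, Nat.card_eq_fintype_card, Fintype.card_sigma]
  have hcomp : ∀ a : (n → ZMod 2), Fintype.card {b : n → ZMod 2 // a ≠ 0 ∧ a ⬝ᵥ b = 0}
      = if a = 0 then 0 else 2 ^ (Fintype.card n - 1) := by
    intro a
    rcases eq_or_ne a 0 with h | h
    · rw [if_pos h]
      apply Fintype.card_eq_zero_iff.mpr
      exact ⟨fun b => b.2.1 h⟩
    · rw [if_neg h]
      have e2 : {b : n → ZMod 2 // a ≠ 0 ∧ a ⬝ᵥ b = 0} ≃ {b : n → ZMod 2 // a ⬝ᵥ b = 0} :=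
        Equiv.subtypeEquivRight (fun b => and_iff_right h)
      rw [Fintype.card_congr e2, ← Nat.card_eq_fintype_card, card_hyperplane a h]
  rw [Finset.sum_congr rfl (fun a _ => hcomp a)]
  rw [Finset.sum_ite, Finset.sum_const, Finset.sum_const, smul_eq_mul, smul_eq_mul, mul_zero,
    zero_add]
  have hfilter : (Finset.univ.filter (fun a : n → ZMod 2 => ¬ a = 0)).card
      = 2 ^ Fintype.card n - 1 := by
    rw [Finset.filter_not, Finset.card_sdiff_of_subset (Finset.filter_subset _ _)]
    rw [Finset.filter_eq' Finset.univ (0 : n → ZMod 2)]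
    simp only [Finset.mem_univ, if_true, Finset.card_singleton, Finset.card_univ]
    rw [Fintype.card_fun]
    rfl
  rw [hfilter, mul_comm]
lemma coset2_eq (d : Matrix (n ⊕ n) (n ⊕ n) ℤ) :
    {x | ∃ p ∈ Theta (n := n), x = p * Mlow * d} = coset (Mlow * d) := by
  ext x
  constructor
  · rintro ⟨p, hp, rfl⟩
    exact ⟨p, hp, by rw [Matrix.mul_assoc]⟩
  · rintro ⟨p, hp, rfl⟩
    exact ⟨p, hp, by rw [Matrix.mul_assoc]⟩

lemma diag_red_eq_zero_iff (M N : Matrix n n ℤ) :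
    (red2 M * (red2 N)ᵀ).diag = 0 ↔ ∀ i, (2 : ℤ) ∣ (M * Nᵀ).diag i := by
  rw [← red2_transpose, ← red2_mul, funext_iff]
  apply forall_congr'
  intro i
  show (((M * Nᵀ).diag i : ℤ) : ZMod 2) = 0 ↔ _
  rw [ZMod.intCast_zmod_eq_zero_iff_dvd]
  norm_num

theorem thetaGroupSet_eq (g : ℕ) : thetaGroupSet g = Theta (n := Fin g) := by
  ext γ
  show _ ∧ _ ∧ _ ↔ _ ∧ _
  rw [Prod.ext_iff]
  unfold phi
  rw [red_toBlocks₁₁, red_toBlocks₁₂, red_toBlocks₂₁, red_toBlocks₂₂]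
  show _ ↔ _ ∧ _ = Prod.fst 0 ∧ _ = Prod.snd 0
  rw [show Prod.fst (0 : (Fin g → ZMod 2) × (Fin g → ZMod 2)) = 0 from rfl,
    show Prod.snd (0 : (Fin g → ZMod 2) × (Fin g → ZMod 2)) = 0 from rfl,
    diag_red_eq_zero_iff, diag_red_eq_zero_iff]
  tauto

theorem siegelParabolicSet_eq (g : ℕ) : siegelParabolicSet g = Siegel (n := Fin g) := rfl

theorem lowerM_eq (g : ℕ) : lowerM g = Mlow (n := Fin g) := rfl

/-- decomposition into the two double cosets -/
theorem decomposition {γ : Matrix (n ⊕ n) (n ⊕ n) ℤ} (hγ : γ ∈ Matrix.symplecticGroup n ℤ) :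
    (∃ p ∈ Theta (n := n), ∃ d ∈ Siegel (n := n), γ = p * d) ∨
    (∃ p ∈ Theta (n := n), ∃ d ∈ Siegel (n := n), γ = p * Mlow * d) := by
  rcases eq_or_ne (psi γ).1 0 with h | h
  · left
    have hψ : psi (dB (psi γ).2) = psi γ := by
      rw [psi_dB, ← h]
    obtain ⟨hp, heq⟩ := coset_of_psi_eq (dB_mem _) hγ hψ
    exact ⟨γ * invS (dB (psi γ).2), hp, dB (psi γ).2, ⟨dB_mem _, dB_21 _⟩, heq⟩
  · right
    obtain ⟨d, hd, h21, hψ⟩ := exists_siegel_psi (psi γ).1 (psi γ).2 h (psi_even hγ)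
    have hψ' : psi (Mlow * d) = psi γ := by rw [hψ]
    obtain ⟨hp, heq⟩ := coset_of_psi_eq (mul_mem Mlow_mem hd) hγ hψ'
    exact ⟨γ * invS (Mlow * d), hp, d, ⟨hd, h21⟩,
      by rw [Matrix.mul_assoc]; exact heq⟩

/-- the two double cosets are disjoint -/
theorem disjointness [Nonempty n] {γ : Matrix (n ⊕ n) (n ⊕ n) ℤ} :
    ¬ ((∃ p ∈ Theta (n := n), ∃ d ∈ Siegel (n := n), γ = p * d) ∧
       (∃ p ∈ Theta (n := n), ∃ d ∈ Siegel (n := n), γ = p * Mlow * d)) := by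
  rintro ⟨⟨p, hp, d, hd, rfl⟩, ⟨p', hp', d', hd', h2⟩⟩
  have e1 : psi (p * d) = psi d := psi_theta_mul hp hd.1
  have e2 : psi (p' * Mlow * d') = psi (Mlow * d') := by
    rw [Matrix.mul_assoc]
    exact psi_theta_mul hp' (mul_mem Mlow_mem hd'.1)
  have e3 : psi d = psi (Mlow * d') := by rw [← e1, h2, e2]
  have e4 := congrArg Prod.fst e3
  rw [psi_siegel_fst d hd.2, psi_Mlow_mul d' hd'.2] at e4
  exact psi_Mlow_fst_ne hd'.1 hd'.2 e4.symm

end DCD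

/-- `Sp(2g,ℤ)` decomposes into exactly two double cosets for `Γ_g(1,2)` and
`Δ_g(ℤ)`, namely `Γ_g(1,2)·Δ_g(ℤ)` and `Γ_g(1,2)·[[I,0],[I,I]]·Δ_g(ℤ)`;
the first contains `2^g` left cosets of `Γ_g(1,2)`, the second
`2^{g-1}(2^g - 1)`. -/
theorem double_coset_decomposition {g : ℕ} (hg : 1 ≤ g) :
    (∀ γ ∈ Matrix.symplecticGroup (Fin g) ℤ,
      (∃ p ∈ thetaGroupSet g, ∃ d ∈ siegelParabolicSet g, γ = p * d) ∨
      (∃ p ∈ thetaGroupSet g, ∃ d ∈ siegelParabolicSet g, γ = p * lowerM g * d)) ∧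
    (∀ γ : Matrix (Fin g ⊕ Fin g) (Fin g ⊕ Fin g) ℤ,
      ¬ ((∃ p ∈ thetaGroupSet g, ∃ d ∈ siegelParabolicSet g, γ = p * d) ∧
        (∃ p ∈ thetaGroupSet g, ∃ d ∈ siegelParabolicSet g, γ = p * lowerM g * d))) ∧
    Nat.card {C : Set (Matrix (Fin g ⊕ Fin g) (Fin g ⊕ Fin g) ℤ) |
      ∃ d ∈ siegelParabolicSet g, C = {x | ∃ p ∈ thetaGroupSet g, x = p * d}} = 2 ^ g ∧
    Nat.card {C : Set (Matrix (Fin g ⊕ Fin g) (Fin g ⊕ Fin g) ℤ) |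
      ∃ d ∈ siegelParabolicSet g, C = {x | ∃ p ∈ thetaGroupSet g, x = p * lowerM g * d}} =
      2 ^ (g - 1) * (2 ^ g - 1) := by
  have hne : Nonempty (Fin g) := ⟨⟨0, hg⟩⟩
  rw [DCD.thetaGroupSet_eq g, DCD.siegelParabolicSet_eq g, DCD.lowerM_eq g]
  refine ⟨?_, ?_, ?_, ?_⟩
  · intro γ hγ
    exact DCD.decomposition hγ
  · intro γ
    exact DCD.disjointness
  · have h1 : {C : Set (Matrix (Fin g ⊕ Fin g) (Fin g ⊕ Fin g) ℤ) |
        ∃ d ∈ DCD.Siegel, C = {x | ∃ p ∈ DCD.Theta, x = p * d}}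
        = Set.range (fun β : Fin g → ZMod 2 => DCD.coset (DCD.dB β)) := DCD.T1_eq
    rw [h1, Nat.card_range_of_injective DCD.k1_inj, Nat.card_fun]
    rw [Nat.card_eq_fintype_card, Nat.card_eq_fintype_card, ZMod.card, Fintype.card_fin]
  · have h2 : {C : Set (Matrix (Fin g ⊕ Fin g) (Fin g ⊕ Fin g) ℤ) |
        ∃ d ∈ DCD.Siegel, C = {x | ∃ p ∈ DCD.Theta, x = p * DCD.Mlow * d}}
        = Set.range (fun ε : DCD.Epar (Fin g) => DCD.coset (DCD.Mlow * DCD.dd ε)) := by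
      have : ∀ d : Matrix (Fin g ⊕ Fin g) (Fin g ⊕ Fin g) ℤ,
          {x | ∃ p ∈ DCD.Theta, x = p * DCD.Mlow * d} = DCD.coset (DCD.Mlow * d) :=
        fun d => DCD.coset2_eq d
      calc {C : Set (Matrix (Fin g ⊕ Fin g) (Fin g ⊕ Fin g) ℤ) |
          ∃ d ∈ DCD.Siegel, C = {x | ∃ p ∈ DCD.Theta, x = p * DCD.Mlow * d}}
          = {C : Set (Matrix (Fin g ⊕ Fin g) (Fin g ⊕ Fin g) ℤ) |
          ∃ d ∈ DCD.Siegel, C = DCD.coset (DCD.Mlow * d)} := by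
            apply Set.ext
            intro C
            constructor
            · rintro ⟨d, hd, rfl⟩; exact ⟨d, hd, (this d)⟩
            · rintro ⟨d, hd, rfl⟩; exact ⟨d, hd, (this d).symm⟩
        _ = Set.range (fun ε : DCD.Epar (Fin g) => DCD.coset (DCD.Mlow * DCD.dd ε)) := DCD.T2_eq
    rw [h2, Nat.card_range_of_injective DCD.k2_inj, DCD.card_Epar, Fintype.card_fin]
end

section
/- For every even characteristic ζ = [a;b] with a ≠ 0, there exists b' ∈ 𝔽₂^g with a·b' = 1 (an odd characteristic [a;b'] exists), and the symmetric matrix S = βbᵀ + bβᵀ (where β is any integer lift of b') satisfies Sa + S₀ ≡ b mod 2. -/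
open Matrix

/-- For every even characteristic `[a;b]` with `a ≠ 0` there is `b'` with
`a · b' = 1` (an odd characteristic `[a;b']`), and for integer lifts `β` of `b'`
and `B` of `b`, and `A` of `a`, the symmetric matrix `S = β Bᵀ + B βᵀ` satisfies
`S a + S₀ ≡ b mod 2`. -/
theorem exists_odd_char_and_S {g : ℕ} (a b : Fin g → ZMod 2)
    (heven : a ⬝ᵥ b = 0) (ha : a ≠ 0) :
    ∃ b' : Fin g → ZMod 2, a ⬝ᵥ b' = 1 ∧
      ∀ β B A : Fin g → ℤ,
        (∀ i, ((β i : ZMod 2)) = b' i) →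
        (∀ i, ((B i : ZMod 2)) = b i) →
        (∀ i, ((A i : ZMod 2)) = a i) →
        ∀ i, (((Matrix.vecMulVec β B + Matrix.vecMulVec B β).mulVec A i +
            (Matrix.vecMulVec β B + Matrix.vecMulVec B β).diag i : ℤ) : ZMod 2) = b i := by
  obtain ⟨j, hj⟩ := Function.ne_iff.mp ha
  simp only [Pi.zero_apply] at hj
  have haj : a j = 1 := by revert hj; generalize a j = x; revert x; decide
  set b' : Fin g → ZMod 2 := fun i => if i = j then 1 else 0 with hb'
  refine ⟨b', ?_, ?_⟩
  · simp [dotProduct, hb', haj]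
  · intro β B A hβ hB hA i
    have h1 : ∑ k, b k * a k = 0 := by
      rw [dotProduct] at heven
      simpa [mul_comm] using heven
    have h2 : ∑ k, b' k * a k = 1 := by
      simp [hb', haj]
    have hcast : (((Matrix.vecMulVec β B + Matrix.vecMulVec B β).mulVec A i +
        (Matrix.vecMulVec β B + Matrix.vecMulVec B β).diag i : ℤ) : ZMod 2)
        = ∑ k, (b' i * b k + b i * b' k) * a k + (b' i * b i + b i * b' i) := by
      simp only [Matrix.mulVec, Matrix.vecMulVec_apply, Matrix.diag_apply,
        Matrix.add_apply, dotProduct, Pi.add_apply]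
      push_cast
      simp [hβ, hB, hA]
    rw [hcast]
    have hsum : ∑ k, (b' i * b k + b i * b' k) * a k
        = b' i * ∑ k, b k * a k + b i * ∑ k, b' k * a k := by
      rw [Finset.mul_sum, Finset.mul_sum, ← Finset.sum_add_distrib]
      congr 1; ext k; ring
    rw [hsum, h1, h2]
    have : b' i * b i + b i * b' i = 0 := by
      rw [mul_comm (b' i)]; exact CharTwo.add_self_eq_zero _
    rw [this]
    ring
end

section
/- For U ∈ GL_g(ℤ), the diagonal of UᵀU is congruent to Uᵀ𝟙₀ mod 2, where 𝟙₀ is the all-ones vector; consequently, choosing U ∈ GL_g(ℤ) with Uᵀ𝟙₀ ≡ a mod 2 for a given a ∈ 𝔽₂^g, the symplectic matrix [[U⁻¹, 0],[diag(a)U⁻¹ − Uᵀ, Uᵀ]] lies in the theta group Γ_g(1,2). -/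
open Matrix

/-- For `U ∈ GL_g(ℤ)` the diagonal of `UᵀU` is congruent to `Uᵀ𝟙` mod 2, and if
`Uᵀ𝟙 ≡ a mod 2` then `[[U⁻¹, 0],[diag(a)U⁻¹ − Uᵀ, Uᵀ]]` lies in the theta
group `Γ_g(1,2)`. -/
theorem diag_transpose_mul_self_and_theta_membership {g : ℕ}
    (U : Matrix (Fin g) (Fin g) ℤ) (hU : IsUnit U.det) :
    (∀ i, (((Uᵀ * U).diag i : ℤ) : ZMod 2) = ((Uᵀ.mulVec (fun _ => 1) i : ℤ) : ZMod 2)) ∧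
    (∀ (a : Fin g → ZMod 2) (aInt : Fin g → ℤ),
      (∀ i, ((aInt i : ZMod 2)) = a i) →
      (∀ i, ((Uᵀ.mulVec (fun _ => 1) i : ℤ) : ZMod 2) = a i) →
      Matrix.fromBlocks U⁻¹ 0 (Matrix.diagonal aInt * U⁻¹ - Uᵀ) Uᵀ ∈ thetaGroupSet g) := by
  have hinv : U⁻¹ * U = 1 := nonsing_inv_mul U hU
  have hinv' : U * U⁻¹ = 1 := mul_nonsing_inv U hU
  have hdiag : ∀ i, (((Uᵀ * U).diag i : ℤ) : ZMod 2)
      = ((Uᵀ.mulVec (fun _ => 1) i : ℤ) : ZMod 2) := by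
    intro i
    simp only [Matrix.diag, Matrix.mul_apply, Matrix.mulVec, dotProduct,
      Matrix.transpose_apply, mul_one]
    push_cast
    refine Finset.sum_congr rfl fun k _ => ?_
    have : ∀ x : ZMod 2, x * x = x := by decide
    exact this _
  refine ⟨hdiag, fun a aInt ha haU => ?_⟩
  -- key: C * Dᵀ = diagonal aInt - Uᵀ * U
  have hCD : (Matrix.diagonal aInt * U⁻¹ - Uᵀ) * (Uᵀ)ᵀ = Matrix.diagonal aInt - Uᵀ * U := by
    rw [Matrix.transpose_transpose, Matrix.sub_mul, Matrix.mul_assoc, hinv, Matrix.mul_one]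
  refine ⟨?_, ?_, ?_⟩
  · rw [SymplecticGroup.mem_iff, Matrix.J, Matrix.fromBlocks_transpose,
      Matrix.fromBlocks_multiply, Matrix.fromBlocks_multiply, Matrix.fromBlocks_inj]
    have hT : Uᵀ * U⁻¹ᵀ = 1 := by
      rw [← Matrix.transpose_mul, hinv, Matrix.transpose_one]
    have e1 : Uᵀ * (U⁻¹ᵀ * Matrix.diagonal aInt) = Matrix.diagonal aInt := by
      rw [← Matrix.mul_assoc, hT, Matrix.one_mul]
    have e2 : Matrix.diagonal aInt * U⁻¹ * U = Matrix.diagonal aInt := by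
      rw [Matrix.mul_assoc, hinv, Matrix.mul_one]
    refine ⟨by simp, by simp [hinv], by simp [hT], ?_⟩
    simp only [Matrix.mul_zero, Matrix.zero_mul, zero_add, add_zero, Matrix.mul_one,
      Matrix.mul_neg, Matrix.neg_mul, Matrix.transpose_transpose, Matrix.transpose_sub,
      Matrix.transpose_mul, Matrix.transpose_zero, Matrix.diagonal_transpose,
      Matrix.mul_sub, Matrix.sub_mul, e1, e2]
    abel
  · intro i
    simp
  · intro i
    have h2 : (((Matrix.fromBlocks U⁻¹ 0 (Matrix.diagonal aInt * U⁻¹ - Uᵀ) Uᵀ).toBlocks₂₁ *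
        ((Matrix.fromBlocks U⁻¹ 0 (Matrix.diagonal aInt * U⁻¹ - Uᵀ) Uᵀ).toBlocks₂₂)ᵀ).diag i : ℤ)
        = aInt i - (Uᵀ * U).diag i := by
      simp only [Matrix.toBlocks_fromBlocks₂₁, Matrix.toBlocks_fromBlocks₂₂, hCD]
      simp [Matrix.diag]
    rw [h2]
    have h3 : ((aInt i - (Uᵀ * U).diag i : ℤ) : ZMod 2) = 0 := by
      push_cast
      rw [ha, ← haU, hdiag i]
      ring
    have := (ZMod.intCast_zmod_eq_zero_iff_dvd _ 2).mp h3
    exact_mod_cast this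
end

section
/- Let 𝓛 = {S ∈ V_g(ℤ) : S𝟙₀ + S₀ ≡ 0 mod 2} and 𝓛* its dual lattice with respect to ⟨A,B⟩ = tr(AB). Then every element of 4𝓛* is an even integral symmetric matrix (integral with even diagonal), and in fact the diagonal entries of elements of 4𝓛* are multiples of 4. -/
open Matrix

/-- The lattice `𝓛 = {S ∈ V_g(ℤ) : S𝟙 + S₀ ≡ 0 mod 2}` of integral symmetric
matrices. -/
def latticeL (g : ℕ) : Set (Matrix (Fin g) (Fin g) ℤ) :=
  {S | S.IsSymm ∧ ∀ i, (2 : ℤ) ∣ (S.mulVec (fun _ => 1) i + S.diag i)}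

/-- If `T` is a real symmetric matrix in the dual lattice `𝓛*` (i.e.
`tr(T·S) ∈ ℤ` for all `S ∈ 𝓛`), then `4T` is an even integral symmetric matrix
(integral, with even diagonal), and in fact the diagonal entries of `4T` are
multiples of `4`. -/
theorem fourTimes_dual_is_very_even {g : ℕ}
    (T : Matrix (Fin g) (Fin g) ℝ) (hsymm : T.IsSymm)
    (hdual : ∀ S ∈ latticeL g, ∃ z : ℤ, (T * S.map (Int.cast : ℤ → ℝ)).trace = (z : ℝ)) :
    (∀ i j, ∃ z : ℤ, (4 : ℝ) * T i j = (z : ℝ)) ∧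
    (∀ i, ∃ z : ℤ, (4 : ℝ) * T i i = ((2 * z : ℤ) : ℝ)) ∧
    (∀ i, ∃ z : ℤ, (4 : ℝ) * T i i = ((4 * z : ℤ) : ℝ)) := by
  have hdiag : ∀ i : Fin g, ∃ z : ℤ, T i i = (z : ℝ) := by
    intro i
    obtain ⟨z, hz⟩ := hdual (Matrix.single i i 1) ⟨by
      ext a b
      simp [Matrix.IsSymm, Matrix.single, and_comm], by
      intro k
      simp only [mulVec, dotProduct, diag, Matrix.single, mul_one]
      by_cases h : i = k <;> simp [h, Finset.sum_ite_eq]⟩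
    refine ⟨z, ?_⟩
    rw [← hz]
    simp [Matrix.trace, Matrix.mul_apply, Matrix.diag, Matrix.single, ite_and,
      Finset.sum_ite_eq, Finset.sum_ite_eq']
  have hoff : ∀ i j : Fin g, ∃ z : ℤ, (4 : ℝ) * T i j = (z : ℝ) := by
    intro i j
    obtain ⟨z, hz⟩ := hdual ((2 : ℤ) • (Matrix.single i j 1 + Matrix.single j i 1)) ⟨by
      ext a b
      simp [Matrix.IsSymm, Matrix.single, and_comm]
      split_ifs <;> ring, by
      intro k
      simp only [smul_mulVec, diag_smul, Pi.smul_apply, smul_eq_mul]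
      exact dvd_add ⟨_, rfl⟩ ⟨_, rfl⟩⟩
    refine ⟨z, ?_⟩
    rw [← hz]
    have hs : T j i = T i j := by
      conv_lhs => rw [← hsymm]
      rfl
    simp [Matrix.trace, Matrix.mul_apply, Matrix.diag, Matrix.single, ite_and,
      Finset.sum_ite_eq, Finset.sum_ite_eq', mul_add, Finset.sum_add_distrib, hs]
    ring
  refine ⟨hoff, fun i => ?_, fun i => ?_⟩
  · obtain ⟨z, hz⟩ := hdiag i
    exact ⟨2 * z, by push_cast [hz]; ring⟩
  · obtain ⟨z, hz⟩ := hdiag i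
    exact ⟨z, by push_cast [hz]; ring⟩
end

section
/- Let L be an m×g complex matrix with LᵀL = 0 and Lᵀ L̄ positive definite (where L̄ is the complex conjugate). Then for every ν ∈ ℤ_{≥0}, the polynomial P_ν(X) = det(LᵀX)^ν on m×g matrices X satisfies: (1) P_ν(XA) = det(A)^ν P_ν(X) for all A ∈ GL_g(ℂ), and (2) P_ν is harmonic, i.e. Σ_{i,j} ∂²P_ν/(∂X_{ij})² = 0. -/
open Matrix

/-- The polynomial `P_ν(X) = det(Lᵀ X)^ν` on `m × g` complex matrices. -/
noncomputable def Pnu {m g : ℕ} (L : Matrix (Fin m) (Fin g) ℂ) (ν : ℕ)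
    (X : Matrix (Fin m) (Fin g) ℂ) : ℂ :=
  (Lᵀ * X).det ^ ν

/-- Second derivative at `0` of `t ↦ (a + t c)^ν`. -/
lemma iter2_affine_pow (a c : ℂ) (ν : ℕ) :
    iteratedDeriv 2 (fun t : ℂ => (a + t * c) ^ ν) 0
      = (ν : ℂ) * ((ν - 1 : ℕ) : ℂ) * a ^ (ν - 2) * (c * c) := by
  have hline : ∀ t : ℂ, HasDerivAt (fun t : ℂ => a + t * c) c t := fun t => by
    simpa using ((hasDerivAt_id t).mul_const c).const_add a
  have h1 : deriv (fun t : ℂ => (a + t * c) ^ ν)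
      = fun t => (ν : ℂ) * (a + t * c) ^ (ν - 1) * c := by
    funext t
    exact (((hline t).pow ν)).deriv
  have h2 : HasDerivAt (fun t : ℂ => (ν : ℂ) * (a + t * c) ^ (ν - 1) * c)
      ((ν : ℂ) * (((ν - 1 : ℕ) : ℂ) * (a + 0 * c) ^ (ν - 1 - 1) * c) * c) 0 := by
    exact (((hline 0).pow (ν - 1)).const_mul (ν : ℂ)).mul_const c
  rw [show (2 : ℕ) = 1 + 1 from rfl, iteratedDeriv_succ, iteratedDeriv_one, h1, h2.deriv]
  simp [Nat.sub_sub]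
  ring

/-- If `L` is an `m × g` complex matrix with `LᵀL = 0` and `Lᵀ L̄` positive
definite, then for every `ν ≥ 0` the polynomial `P_ν(X) = det(LᵀX)^ν` satisfies
`P_ν(XA) = det(A)^ν P_ν(X)` for all `A ∈ GL_g(ℂ)` and is harmonic:
`Σ_{i,j} ∂²P_ν/∂X_{ij}² = 0`. -/
theorem Pnu_harmonic_of_weight {m g : ℕ} (hm : 2 * g ≤ m)
    (L : Matrix (Fin m) (Fin g) ℂ)
    (h0 : Lᵀ * L = 0)
    (hpos : (Lᵀ * L.map (starRingEnd ℂ)).IsHermitian ∧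
      ∀ x : Fin g → ℂ, x ≠ 0 →
        0 < ((star x ⬝ᵥ (Lᵀ * L.map (starRingEnd ℂ)).mulVec x).re))
    (ν : ℕ) :
    (∀ (A : Matrix (Fin g) (Fin g) ℂ), IsUnit A.det →
      ∀ X, Pnu L ν (X * A) = A.det ^ ν * Pnu L ν X) ∧
    (∀ X : Matrix (Fin m) (Fin g) ℂ,
      ∑ i : Fin m, ∑ j : Fin g,
        iteratedDeriv 2 (fun t : ℂ => Pnu L ν (X + t • Matrix.single i j 1)) 0 = 0) := by
  constructor
  · -- weight transformation
    intro A _ X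
    simp [Pnu, ← Matrix.mul_assoc, Matrix.det_mul, mul_pow, mul_comm]
  · -- harmonicity
    intro X
    set M := Lᵀ * X with hM
    -- the perturbed matrix is a column update of `M`
    have key : ∀ (i : Fin m) (j : Fin g) (t : ℂ),
        Lᵀ * (X + t • Matrix.single i j 1)
          = M.updateCol j ((fun k => M k j) + t • (L i)) := by
      intro i j t
      ext k l
      simp only [mul_apply, updateCol_apply, Matrix.add_apply, Matrix.smul_apply,
        transpose_apply, single_apply, smul_eq_mul, Pi.add_apply, Pi.smul_apply, hM,
        mul_ite, mul_one, mul_zero, mul_add]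
      rw [Finset.sum_add_distrib]
      by_cases h : l = j
      · subst h
        simp [Finset.mul_sum, Finset.sum_ite_eq, mul_comm]
      · simp [Ne.symm h, h]
    -- affine form of the determinant
    have hdet : ∀ (i : Fin m) (j : Fin g) (t : ℂ),
        (Lᵀ * (X + t • Matrix.single i j 1)).det
          = M.det + t * M.cramer (L i) j := by
      intro i j t
      rw [key i j t, ← cramer_apply, map_add, _root_.map_smul]
      simp [cramer_apply, updateCol_eq_self]
    -- second derivatives
    have hderiv : ∀ (i : Fin m) (j : Fin g),
        iteratedDeriv 2 (fun t : ℂ => Pnu L ν (X + t • Matrix.single i j 1)) 0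
          = (ν : ℂ) * ((ν - 1 : ℕ) : ℂ) * M.det ^ (ν - 2)
              * (M.cramer (L i) j * M.cramer (L i) j) := by
      intro i j
      have : (fun t : ℂ => Pnu L ν (X + t • Matrix.single i j 1))
          = fun t : ℂ => (M.det + t * M.cramer (L i) j) ^ ν := by
        funext t; rw [Pnu, hdet]
      rw [this, iter2_affine_pow]
    simp only [hderiv]
    -- orthogonality relation coming from `LᵀL = 0`
    have hLL : ∀ k k' : Fin g, ∑ i : Fin m, L i k * L i k' = 0 := by
      intro k k'
      have := congrFun (congrFun h0 k) k'
      simpa [mul_apply] using this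
    -- expand `cramer` linearly in the inserted column
    set d : Fin g → Fin g → ℂ := fun j k => M.cramer (Pi.single k 1) j with hd
    have hcram : ∀ (i : Fin m) (j : Fin g),
        M.cramer (L i) j = ∑ k, L i k * d j k := by
      intro i j
      have h1 : L i = ∑ k, (L i k) • (Pi.single k 1 : Fin g → ℂ) := by
        funext l
        simp [Pi.single_apply, Finset.sum_ite_eq']
      conv_lhs => rw [h1, map_sum]
      simp [hd, _root_.map_smul]
    have inner : ∀ j : Fin g,
        ∑ i : Fin m, M.cramer (L i) j * M.cramer (L i) j = 0 := by
      intro j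
      simp only [hcram]
      calc ∑ i : Fin m, (∑ k, L i k * d j k) * (∑ k', L i k' * d j k')
          = ∑ i : Fin m, ∑ k, ∑ k', (L i k * L i k') * (d j k * d j k') := by
            simp_rw [Finset.sum_mul_sum]
            congr 1; funext i; congr 1; funext k; congr 1; funext k'; ring
        _ = ∑ k, ∑ k', (∑ i : Fin m, L i k * L i k') * (d j k * d j k') := by
            rw [Finset.sum_comm]
            congr 1; funext k
            rw [Finset.sum_comm]
            congr 1; funext k'
            rw [Finset.sum_mul]
        _ = 0 := by simp [hLL]
    rw [Finset.sum_comm]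
    refine Finset.sum_eq_zero fun j _ => ?_
    rw [← Finset.mul_sum, inner j, mul_zero]
end
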